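/- arXiv:2404.16318 — 9 statements merged into one kernel-verified Lean document; each statement's English description precedes it below -/
import Mathlib

section
/- The complement of a proper maximal cohesive set is maximal cohesive: if M ⊂ V is a maximal cohesive set of the influence network G(W) with M ≠ V, then V\M is also a maximal cohesive set. -/
open Finset Filter Topology

/-- `m` is a weighted median of the values `x` with respect to weights `w`. -/
def IsWeightedMedian {n : ℕ} (x w : Fin n → ℝ) (m : ℝ) : Prop :=
  (∃ i, x i = m) ∧
  ∑ i ∈ univ.filter (fun i => x i < m), w i ≤ 1 / 2 ∧
  ∑ i ∈ univ.filter (fun i => m < x i), w i ≤ 1 / 2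

/-- `W` is a row-stochastic matrix. -/
def RowStochastic {n : ℕ} (W : Matrix (Fin n) (Fin n) ℝ) : Prop :=
  (∀ i j, 0 ≤ W i j) ∧ ∀ i, ∑ j, W i j = 1

/-- `M` is a cohesive set of the influence network `G(W)`. -/
def Cohesive {n : ℕ} (W : Matrix (Fin n) (Fin n) ℝ) (M : Finset (Fin n)) : Prop :=
  ∀ i ∈ M, (1 : ℝ) / 2 ≤ ∑ j ∈ M, W i j

/-- `M` is a maximal cohesive set of the influence network `G(W)`. -/
def MaxCohesive {n : ℕ} (W : Matrix (Fin n) (Fin n) ℝ) (M : Finset (Fin n)) : Prop :=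
  Cohesive W M ∧ ∀ i ∉ M, ¬ ((1 : ℝ) / 2 < ∑ j ∈ M, W i j)

/-- `Med` is the weighted-median operator: `Med x i` is the weighted median of `x`
with respect to the `i`-th row of `W` that is closest to `x i`. -/
def IsMedSelection {n : ℕ} (W : Matrix (Fin n) (Fin n) ℝ)
    (Med : (Fin n → ℝ) → Fin n → ℝ) : Prop :=
  ∀ x i, IsWeightedMedian x (W i) (Med x i) ∧
    ∀ m, IsWeightedMedian x (W i) m → |Med x i - x i| ≤ |m - x i|

/-- `φ` is the solution map of the ODE `ẋ = g(x)`: `φ x0` is the solution starting at `x0`. -/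
def IsFlow {n : ℕ} (g : (Fin n → ℝ) → (Fin n → ℝ))
    (φ : (Fin n → ℝ) → ℝ → (Fin n → ℝ)) : Prop :=
  ∀ x, φ x 0 = x ∧ ∀ t : ℝ, HasDerivAt (φ x) (g (φ x t)) t

/-- `order^{≤ r}(x)`: indices whose value is among the `r` largest distinct values of `x`. -/
noncomputable def orderLe {n : ℕ} (x : Fin n → ℝ) (r : ℕ) : Finset (Fin n) :=
  univ.filter (fun i => ((univ.image x).filter (fun v => x i < v)).card < r)

/-- The set of equilibria of the CTWM dynamics. -/
def Xeq {n : ℕ} (W : Matrix (Fin n) (Fin n) ℝ) : Set (Fin n → ℝ) :=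
  {x | ∀ r : ℕ, 1 ≤ r → r ≤ (univ.image x).card → MaxCohesive W (orderLe x r)}

/-- The ω-limit set of a trajectory `φ`. -/
def omegaLimitSet {n : ℕ} (φ : ℝ → (Fin n → ℝ)) : Set (Fin n → ℝ) :=
  {z | ∃ u : ℕ → ℝ, Tendsto u atTop atTop ∧ Tendsto (fun k => φ (u k)) atTop (𝓝 z)}

theorem sum_compl_row_eq_one_sub {n : ℕ} {W : Matrix (Fin n) (Fin n) ℝ}
    (hrow : ∀ i, ∑ j, W i j = 1) (M : Finset (Fin n)) (i : Fin n) :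
    ∑ j ∈ Mᶜ, W i j = 1 - ∑ j ∈ M, W i j := by
  rw [← hrow i, ← sum_add_sum_compl M (W i), add_sub_cancel_left]

theorem cohesive_compl_of_not_expandable {n : ℕ} {W : Matrix (Fin n) (Fin n) ℝ}
    (hrow : ∀ i, ∑ j, W i j = 1) {M : Finset (Fin n)}
    (hM : ∀ i ∉ M, ¬ ((1 : ℝ) / 2 < ∑ j ∈ M, W i j)) : Cohesive W Mᶜ := by
  intro i hi
  have := hM i (mem_compl.mp hi)
  rw [sum_compl_row_eq_one_sub hrow]
  linarith

theorem Cohesive.compl_not_expandable {n : ℕ} {W : Matrix (Fin n) (Fin n) ℝ}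
    (hrow : ∀ i, ∑ j, W i j = 1) {M : Finset (Fin n)} (hM : Cohesive W M) :
    ∀ i ∉ Mᶜ, ¬ ((1 : ℝ) / 2 < ∑ j ∈ Mᶜ, W i j) := by
  intro i hi
  have := hM i (notMem_compl.mp hi)
  rw [sum_compl_row_eq_one_sub hrow]
  linarith

theorem compl_maxCohesive_general {n : ℕ} (W : Matrix (Fin n) (Fin n) ℝ) (hW : RowStochastic W)
    (M : Finset (Fin n)) (hM : MaxCohesive W M) :
    MaxCohesive W Mᶜ :=
  ⟨cohesive_compl_of_not_expandable hW.2 hM.2, hM.1.compl_not_expandable hW.2⟩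

/-- The complement of a proper maximal cohesive set is maximal cohesive. -/
theorem compl_maxCohesive {n : ℕ} (W : Matrix (Fin n) (Fin n) ℝ) (hW : RowStochastic W)
    (M : Finset (Fin n)) (hM : MaxCohesive W M) (hMproper : M ≠ univ) :
    MaxCohesive W Mᶜ :=
  compl_maxCohesive_general W hW M hM
end

section
/- Positive invariance of convex sets mapped into themselves: let X ⊂ ℝ^n be a closed convex set and F : ℝ^n → ℝ^n a Lipschitz continuous vector field such that F(x) ∈ X for all x ∈ X. Then X is positively invariant for the system ẋ = F(x) − x, i.e., every solution starting in X remains in X for all t ≥ 0. -/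
open Finset Filter Topology

/-! The distance `d t` from `φ t` to `X` obeys `d' ≤ (K - 1) d` in the sense of right Dini
derivatives. Indeed, the Euler step `x ↦ x + h • (F x - x)` is a convex combination of `x` and
`F x`, so for `0 ≤ h ≤ 1` it maps `X` into itself and is `(1 + h (K - 1))`-Lipschitz; hence it
shrinks the distance to `X` by that factor, and `φ (t + h)` differs from the Euler step of `φ t`
by `o(h)`. As `d 0 = 0`, Grönwall's inequality forces `d ≡ 0` on `[0, ∞)`, and `X` is closed. -/

open Metric Set

theorem LipschitzWith.infDist_le_mul_of_mapsTo {α : Type*} [PseudoMetricSpace α] {g : α → α}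
    {c : NNReal} {s : Set α} (hg : LipschitzWith c g) (hs : MapsTo g s s) (x : α) :
    infDist (g x) s ≤ c * infDist x s := by
  rcases s.eq_empty_or_nonempty with rfl | hne
  · simp
  have := hne.to_subtype
  rw [infDist_eq_iInf (x := x), Real.mul_iInf_of_nonneg c.coe_nonneg]
  exact le_ciInf fun y => (infDist_le_dist_of_mem (hs y.2)).trans (hg.dist_le_mul x y)

section

variable {E : Type*} [NormedAddCommGroup E] [NormedSpace ℝ E] {F : E → E} {K : NNReal} {h : ℝ}

theorem one_add_mul_sub_one_nonneg (hh : h ∈ Set.Icc (0 : ℝ) 1) : 0 ≤ 1 + h * ((K : ℝ) - 1) := by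
  nlinarith [hh.1, hh.2, K.2]

theorem LipschitzWith.add_smul_sub (hF : LipschitzWith K F) (hh : h ∈ Set.Icc (0 : ℝ) 1) :
    LipschitzWith (1 + h * ((K : ℝ) - 1)).toNNReal (fun x => x + h • (F x - x)) := by
  refine LipschitzWith.of_dist_le_mul fun x y => ?_
  have hsplit : x + h • (F x - x) - (y + h • (F y - y)) = (1 - h) • (x - y) + h • (F x - F y) := by
    module
  rw [Real.coe_toNNReal _ (one_add_mul_sub_one_nonneg hh)]
  calc dist (x + h • (F x - x)) (y + h • (F y - y))
      = ‖(1 - h) • (x - y) + h • (F x - F y)‖ := by rw [dist_eq_norm, hsplit]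
    _ ≤ (1 - h) * dist x y + h * (K * dist x y) := by
      refine (norm_add_le _ _).trans (add_le_add ?_ ?_)
      · rw [norm_smul, Real.norm_of_nonneg (sub_nonneg.2 hh.2), dist_eq_norm]
      · rw [norm_smul, Real.norm_of_nonneg hh.1, ← dist_eq_norm]
        exact mul_le_mul_of_nonneg_left (hF.dist_le_mul x y) hh.1
    _ = (1 + h * (K - 1)) * dist x y := by ring

theorem Convex.infDist_add_smul_sub_le {X : Set E} (hX : Convex ℝ X) (hF : LipschitzWith K F)
    (hFX : MapsTo F X X) (hh : h ∈ Set.Icc (0 : ℝ) 1) (x : E) :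
    infDist (x + h • (F x - x)) X ≤ (1 + h * ((K : ℝ) - 1)) * infDist x X := by
  have hmaps : MapsTo (fun y => y + h • (F y - y)) X X := fun y hy =>
    hX.add_smul_sub_mem hy (hFX hy) hh
  simpa only [Real.coe_toNNReal _ (one_add_mul_sub_one_nonneg hh)] using
    (hF.add_smul_sub hh).infDist_le_mul_of_mapsTo hmaps x

theorem Convex.eventually_slope_infDist_lt {X : Set E} (hX : Convex ℝ X)
    (hF : LipschitzWith K F) (hFX : MapsTo F X X) {φ : ℝ → E} {t r : ℝ}
    (hφ : HasDerivWithinAt φ (F (φ t) - φ t) (Ioi t) t)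
    (hr : ((K : ℝ) - 1) * infDist (φ t) X < r) :
    ∀ᶠ z in 𝓝[>] t, (z - t)⁻¹ * (infDist (φ z) X - infDist (φ t) X) < r := by
  set v := F (φ t) - φ t
  have hslope : Tendsto (fun z => ((K : ℝ) - 1) * infDist (φ t) X + ‖slope φ t z - v‖)
      (𝓝[>] t) (𝓝 (((K : ℝ) - 1) * infDist (φ t) X)) := by
    have := (hasDerivWithinAt_iff_tendsto_slope' (self_notMem_Ioi (a := t))).1 hφ
    simpa using tendsto_const_nhds.add (this.sub_const v).norm
  have hnear : ∀ᶠ z in 𝓝[>] t, z < t + 1 :=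
    nhdsWithin_le_nhds (eventually_lt_nhds (lt_add_one t))
  filter_upwards [hslope.eventually (gt_mem_nhds hr), hnear, self_mem_nhdsWithin]
    with z hlt hz1 (hzt : t < z)
  refine lt_of_le_of_lt ?_ hlt
  have hh : 0 < z - t := sub_pos.2 hzt
  have hdist : dist (φ z) (φ t + (z - t) • v) = (z - t) * ‖slope φ t z - v‖ := by
    have hrem : φ z - (φ t + (z - t) • v) = (z - t) • (slope φ t z - v) := by
      rw [slope_def_module, smul_sub (z - t) _ v, smul_inv_smul₀ hh.ne']
      abel
    rw [dist_eq_norm, hrem, norm_smul, Real.norm_of_nonneg hh.le]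
  have hstep := hX.infDist_add_smul_sub_le hF hFX ⟨hh.le, by linarith⟩ (φ t)
  rw [inv_mul_le_iff₀ hh]
  calc infDist (φ z) X - infDist (φ t) X
      ≤ infDist (φ t + (z - t) • v) X + dist (φ z) (φ t + (z - t) • v) - infDist (φ t) X := by
        gcongr
        exact infDist_le_infDist_add_dist
    _ ≤ (1 + (z - t) * ((K : ℝ) - 1)) * infDist (φ t) X + (z - t) * ‖slope φ t z - v‖
          - infDist (φ t) X := by
        rw [hdist]
        gcongr
    _ = (z - t) * (((K : ℝ) - 1) * infDist (φ t) X + ‖slope φ t z - v‖) := by ring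

end

/-- A closed convex set mapped into itself by `F` is positively invariant
for the system `ẋ = F(x) - x`. -/
theorem convex_closed_positively_invariant {n : ℕ}
    (X : Set (Fin n → ℝ)) (hXclosed : IsClosed X) (hXconvex : Convex ℝ X)
    (F : (Fin n → ℝ) → (Fin n → ℝ)) (K : NNReal) (hF : LipschitzWith K F)
    (hFX : ∀ x ∈ X, F x ∈ X)
    (φ : ℝ → (Fin n → ℝ)) (hφ0 : φ 0 ∈ X)
    (hode : ∀ t : ℝ, 0 ≤ t → HasDerivAt φ (F (φ t) - φ t) t) :
    ∀ t : ℝ, 0 ≤ t → φ t ∈ X := by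
  intro T hT
  set d : ℝ → ℝ := fun t => infDist (φ t) X
  have hd_cont : ContinuousOn d (Set.Icc 0 T) := fun t ht =>
    ((continuous_infDist_pt X).continuousAt.comp (hode t ht.1).continuousAt).continuousWithinAt
  have hd_slope : ∀ t ∈ Set.Ico 0 T, ∀ r, ((K : ℝ) - 1) * d t < r →
      ∃ᶠ z in 𝓝[>] t, (z - t)⁻¹ * (d z - d t) < r := fun t ht _ hr =>
    (hXconvex.eventually_slope_infDist_lt hF hFX (hode t ht.1).hasDerivWithinAt hr).frequently
  have hd0 : d 0 ≤ 0 := (infDist_zero_of_mem hφ0).le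
  have hdT : d T ≤ 0 := by
    simpa only [sub_zero, gronwallBound_ε0_δ0] using
      le_gronwallBound_of_liminf_deriv_right_le hd_cont hd_slope hd0
        (fun t _ => (add_zero _).ge) T ⟨hT, le_rfl⟩
  exact (hXclosed.mem_iff_infDist_zero ⟨_, hφ0⟩).2 (hdT.antisymm infDist_nonneg)
end

section
/- Exclusion from ω-limit sets via invariant neighborhoods: consider ẋ = f(x) with f : ℝ^n → ℝ^n globally Lipschitz, and let G ⊆ ℝ^n be compact and positively invariant. For a given x ∈ G, suppose there exists an open set B ⊆ G such that (1) x ∉ B ∪ ∂B, (2) there exists T > 0 with φ(T,x) ∈ B, and (3) B ∪ ∂B is positively invariant. Then x ∉ ω(y) for every y ∈ G. -/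
open Finset Filter Topology

/-
If the trajectory of `y` accumulated at `x`, then by continuity of `φ(·, T)` it would pass close
enough to `x` to be carried into the open set `B` at some later time. The closed set
`B ∪ ∂B = closure B` is positively invariant, so the trajectory stays in it from then on, and
hence so does every ω-limit point of `y`, `x` included; but `x ∉ B ∪ ∂B`.
-/

section Flow

variable {n : ℕ} {f : (Fin n → ℝ) → (Fin n → ℝ)} {K : NNReal} {φ : (Fin n → ℝ) → ℝ → (Fin n → ℝ)}

theorem IsFlow.apply_add (hφ : IsFlow f φ) (hf : LipschitzWith K f) (y : Fin n → ℝ) (s t : ℝ) :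
    φ y (s + t) = φ (φ y s) t := by
  have hshift : ∀ τ, HasDerivAt (fun τ => φ y (s + τ)) (f (φ y (s + τ))) τ := fun τ =>
    ((hφ y).2 (s + τ)).comp_const_add s τ
  have h := ODE_solution_unique_univ (v := fun _ => f) (s := fun _ => Set.univ) (t₀ := 0)
    (fun _ => hf.lipschitzOnWith) (fun τ => ⟨hshift τ, trivial⟩)
    (fun τ => ⟨(hφ (φ y s)).2 τ, trivial⟩) (by simp [(hφ (φ y s)).1])
  exact congrFun h t

theorem IsFlow.dist_apply_le (hφ : IsFlow f φ) (hf : LipschitzWith K f) (a b : Fin n → ℝ)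
    {t : ℝ} (ht : 0 ≤ t) : dist (φ a t) (φ b t) ≤ dist a b * Real.exp (K * t) := by
  have hφc : ∀ z, ContinuousOn (φ z) (Set.Icc 0 t) := fun z =>
    HasDerivAt.continuousOn fun τ _ => (hφ z).2 τ
  simpa [(hφ a).1, (hφ b).1] using dist_le_of_trajectories_ODE (v := fun _ => f) (K := K)
    (fun _ => hf) (hφc a) (fun τ _ => ((hφ a).2 τ).hasDerivWithinAt)
    (hφc b) (fun τ _ => ((hφ b).2 τ).hasDerivWithinAt) le_rfl t ⟨ht, le_rfl⟩

theorem IsFlow.continuous_apply (hφ : IsFlow f φ) (hf : LipschitzWith K f) {t : ℝ}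
    (ht : 0 ≤ t) : Continuous fun a => φ a t :=
  (LipschitzWith.of_dist_le_mul (K := (Real.exp (K * t)).toNNReal) fun a b => by
    rw [Real.coe_toNNReal _ (Real.exp_pos _).le, mul_comm]
    exact hφ.dist_apply_le hf a b ht).continuous

theorem IsFlow.apply_mem_of_le (hφ : IsFlow f φ) (hf : LipschitzWith K f) {C : Set (Fin n → ℝ)}
    (hC : ∀ z ∈ C, ∀ t : ℝ, 0 ≤ t → φ z t ∈ C) {y : Fin n → ℝ} {s t : ℝ} (hs : φ y s ∈ C)
    (hst : s ≤ t) : φ y t ∈ C := by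
  simpa [← hφ.apply_add hf] using hC _ hs (t - s) (sub_nonneg.2 hst)

end Flow

section OmegaLimit

variable {n : ℕ} {γ : ℝ → (Fin n → ℝ)} {z : Fin n → ℝ}

theorem frequently_mem_of_mem_omegaLimitSet (hz : z ∈ omegaLimitSet γ) {U : Set (Fin n → ℝ)}
    (hU : U ∈ 𝓝 z) : ∃ᶠ t in atTop, γ t ∈ U := by
  obtain ⟨u, hu, hγu⟩ := hz
  exact hu.frequently (hγu.eventually hU).frequently

theorem omegaLimitSet_subset_of_eventually_mem {C : Set (Fin n → ℝ)} (hC : IsClosed C)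
    (h : ∀ᶠ t in atTop, γ t ∈ C) : omegaLimitSet γ ⊆ C := by
  rintro z ⟨u, hu, hγu⟩
  exact hC.mem_of_tendsto hγu (hu.eventually h)

end OmegaLimit

theorem not_mem_omegaLimit_of_invariant_nbhd_general {n : ℕ}
    (f : (Fin n → ℝ) → (Fin n → ℝ)) (K : NNReal) (hf : LipschitzWith K f)
    (φ : (Fin n → ℝ) → ℝ → (Fin n → ℝ)) (hφ : IsFlow f φ)
    (G : Set (Fin n → ℝ))
    (x : Fin n → ℝ)
    (B : Set (Fin n → ℝ)) (hBopen : IsOpen B)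
    (hxnot : x ∉ B ∪ frontier B)
    (hT : ∃ T > (0:ℝ), φ x T ∈ B)
    (hBinv : ∀ y ∈ B ∪ frontier B, ∀ t : ℝ, 0 ≤ t → φ y t ∈ B ∪ frontier B) :
    ∀ y ∈ G, x ∉ omegaLimitSet (φ y) := by
  intro y _ hxω
  rw [← closure_eq_self_union_frontier] at hxnot hBinv
  obtain ⟨T, hT0, hxT⟩ := hT
  have hU : (fun a => φ a T) ⁻¹' B ∈ 𝓝 x :=
    (hφ.continuous_apply hf hT0.le).continuousAt.preimage_mem_nhds (hBopen.mem_nhds hxT)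
  obtain ⟨s, hs⟩ := (frequently_mem_of_mem_omegaLimitSet hxω hU).exists
  have hsT : φ y (s + T) ∈ closure B := by
    rw [hφ.apply_add hf]
    exact subset_closure hs
  have hlater : ∀ᶠ t in atTop, φ y t ∈ closure B :=
    eventually_atTop.2 ⟨s + T, fun t ht => hφ.apply_mem_of_le hf hBinv hsT ht⟩
  exact hxnot (omegaLimitSet_subset_of_eventually_mem isClosed_closure hlater hxω)

/-- Exclusion from ω-limit sets via positively invariant neighborhoods. -/
theorem not_mem_omegaLimit_of_invariant_nbhd {n : ℕ}
    (f : (Fin n → ℝ) → (Fin n → ℝ)) (K : NNReal) (hf : LipschitzWith K f)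
    (φ : (Fin n → ℝ) → ℝ → (Fin n → ℝ)) (hφ : IsFlow f φ)
    (G : Set (Fin n → ℝ)) (hGcompact : IsCompact G)
    (hGinv : ∀ y ∈ G, ∀ t : ℝ, 0 ≤ t → φ y t ∈ G)
    (x : Fin n → ℝ) (hx : x ∈ G)
    (B : Set (Fin n → ℝ)) (hBsub : B ⊆ G) (hBopen : IsOpen B)
    (hxnot : x ∉ B ∪ frontier B)
    (hT : ∃ T > (0:ℝ), φ x T ∈ B)
    (hBinv : ∀ y ∈ B ∪ frontier B, ∀ t : ℝ, 0 ≤ t → φ y t ∈ B ∪ frontier B) :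
    ∀ y ∈ G, x ∉ omegaLimitSet (φ y) :=
  not_mem_omegaLimit_of_invariant_nbhd_general f K hf φ hφ G x B hBopen hxnot hT hBinv
end

section
/- The weighted-median operator is non-expanding: for any x, y ∈ ℝ^n, ‖Med(x;W) − Med(y;W)‖_∞ ≤ ‖x − y‖_∞. Consequently, the map f(x) = Med(x;W) − x is globally Lipschitz on ℝ^n, and for every initial condition x0 ∈ ℝ^n the solution φ(t,x0) of the CTWM dynamics exists and is unique for all t ≥ 0. -/
open Finset Filter Topology

/-! If `a` is the weighted median of `x` closest to `x i` and `y ≤ x + c`, then the median `b` of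
`y` closest to `y i` satisfies `b ≤ a + c`. Otherwise either `a < x i`, and the least value of `x`
above `a` is a median of `x` closer to `x i`; or `y i < b`, and symmetrically the largest value of
`y` below `b` is a median of `y` closer to `y i`. Hence `Med` is `1`-Lipschitz for the sup norm and
`Med - id` is Lipschitz. For a globally Lipschitz field, Picard–Lindelöf yields solutions on time
intervals of a length independent of the initial point; these glue to a solution on `[0, ∞)`, and
uniqueness follows from Gronwall's inequality. -/

def IsClosestWeightedMedian {n : ℕ} (x w : Fin n → ℝ) (i : Fin n) (m : ℝ) : Prop :=
  IsWeightedMedian x w m ∧ ∀ m', IsWeightedMedian x w m' → |m - x i| ≤ |m' - x i|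

section WeightedMedian

variable {n : ℕ} {x y w : Fin n → ℝ} {i : Fin n} {a b c m : ℝ}

lemma sum_filter_le_sum_filter_of_imp {ι : Type*} {s : Finset ι} {f : ι → ℝ}
    {p q : ι → Prop} [DecidablePred p] [DecidablePred q] (hf : ∀ i, 0 ≤ f i)
    (hpq : ∀ i, p i → q i) : ∑ i ∈ s.filter p, f i ≤ ∑ i ∈ s.filter q, f i :=
  sum_le_sum_of_subset_of_nonneg (monotone_filter_right s fun i _ ↦ hpq i) fun i _ _ ↦ hf i

lemma IsWeightedMedian.neg (h : IsWeightedMedian x w m) : IsWeightedMedian (-x) w (-m) := by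
  obtain ⟨⟨j, hj⟩, hlt, hgt⟩ := h
  refine ⟨⟨j, by simp [hj]⟩, ?_, ?_⟩ <;> simpa only [Pi.neg_apply, neg_lt_neg_iff]

lemma IsClosestWeightedMedian.neg (h : IsClosestWeightedMedian x w i m) :
    IsClosestWeightedMedian (-x) w i (-m) := by
  refine ⟨h.1.neg, fun m' hm' ↦ ?_⟩
  have := h.2 (-m') (by simpa using hm'.neg)
  rw [Pi.neg_apply, ← abs_neg, ← abs_neg (m' - _)]
  convert this using 2 <;> ring

/-- If `a < x i`, the least value of `x` above `a` would be a weighted median of `x` closer to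
`x i`; the mass below it is controlled by the median `b` of `y`. -/
lemma IsClosestWeightedMedian.le_of_add_lt (hw : ∀ j, 0 ≤ w j) (hy : ∀ j, y j ≤ x j + c)
    (ha : IsClosestWeightedMedian x w i a) (hb : IsWeightedMedian y w b) (hab : a + c < b) :
    x i ≤ a := by
  by_contra! hxi
  obtain ⟨k, hk, hk_min⟩ :=
    (univ.filter fun j ↦ a < x j).exists_min_image x ⟨i, by simpa using hxi⟩
  simp only [mem_filter, mem_univ, true_and] at hk hk_min
  have hmed : IsWeightedMedian x w (x k) := by
    refine ⟨⟨k, rfl⟩, ?_, ?_⟩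
    · refine (sum_filter_le_sum_filter_of_imp hw fun j hj ↦ ?_).trans hb.2.1
      have : x j ≤ a := not_lt.mp fun h ↦ (hk_min j h).not_gt hj
      linarith [hy j]
    · exact (sum_filter_le_sum_filter_of_imp hw fun j hj ↦ hk.trans hj).trans ha.1.2.2
  have hcloser := ha.2 (x k) hmed
  rw [abs_of_neg (by linarith), abs_of_nonpos (by linarith [hk_min i hxi])] at hcloser
  linarith

lemma IsClosestWeightedMedian.le_add (hw : ∀ j, 0 ≤ w j) (hy : ∀ j, y j ≤ x j + c)
    (ha : IsClosestWeightedMedian x w i a) (hb : IsClosestWeightedMedian y w i b) :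
    b ≤ a + c := by
  by_contra! hab
  have hxa : x i ≤ a := ha.le_of_add_lt hw hy hb.1 hab
  have hby : -y i ≤ -b :=
    hb.neg.le_of_add_lt (c := c) hw (fun j ↦ by simp only [Pi.neg_apply]; linarith [hy j])
      ha.1.neg (by linarith)
  linarith [hy i]

end WeightedMedian

section MedianOperator

variable {n : ℕ} {W : Matrix (Fin n) (Fin n) ℝ} {Med : (Fin n → ℝ) → Fin n → ℝ}

lemma IsMedSelection.le_add (hMed : IsMedSelection W Med) (hW : ∀ i j, 0 ≤ W i j)
    {x y : Fin n → ℝ} {c : ℝ} (hy : ∀ j, y j ≤ x j + c) (i : Fin n) :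
    Med y i ≤ Med x i + c :=
  IsClosestWeightedMedian.le_add (hW i) hy (hMed x i) (hMed y i)

lemma IsMedSelection.norm_sub_le (hMed : IsMedSelection W Med) (hW : ∀ i j, 0 ≤ W i j)
    (x y : Fin n → ℝ) : ‖Med x - Med y‖ ≤ ‖x - y‖ := by
  have hcoord (j : Fin n) : |x j - y j| ≤ ‖x - y‖ := norm_le_pi_norm (x - y) j
  refine (pi_norm_le_iff_of_nonneg (norm_nonneg _)).mpr fun i ↦ ?_
  rw [Pi.sub_apply, Real.norm_eq_abs, abs_sub_le_iff]
  constructor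
  · linarith [hMed.le_add hW (x := y) (y := x) (c := ‖x - y‖)
      (fun j ↦ by linarith [(abs_le.mp (hcoord j)).2]) i]
  · linarith [hMed.le_add hW (x := x) (y := y) (c := ‖x - y‖)
      (fun j ↦ by linarith [(abs_le.mp (hcoord j)).1]) i]

lemma IsMedSelection.lipschitzWith_one (hMed : IsMedSelection W Med) (hW : ∀ i j, 0 ≤ W i j) :
    LipschitzWith 1 Med :=
  LipschitzWith.of_dist_le_mul fun x y ↦ by
    simpa [dist_eq_norm] using hMed.norm_sub_le hW x y

end MedianOperator

section IntegralCurves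

open Set

variable {E : Type*} [NormedAddCommGroup E] [NormedSpace ℝ E] {g : E → E} {K : NNReal}

lemma IsIntegralCurveOn.congr {γ γ' : ℝ → E} {v : ℝ → E → E} {s : Set ℝ}
    (h : IsIntegralCurveOn γ v s) (heq : EqOn γ' γ s) : IsIntegralCurveOn γ' v s :=
  fun t ht ↦ heq ht ▸ (h t ht).congr_of_mem heq ht

lemma IsIntegralCurveOn.union {γ : ℝ → E} {v : ℝ → E → E} {s s' : Set ℝ}
    (h : IsIntegralCurveOn γ v s) (h' : IsIntegralCurveOn γ v s') (hs : IsClosed s)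
    (hs' : IsClosed s') : IsIntegralCurveOn γ v (s ∪ s') := by
  have extend {u : Set ℝ} (hu : IsClosed u) (hγ : IsIntegralCurveOn γ v u) (t : ℝ) :
      HasDerivWithinAt γ (v t (γ t)) u t := by
    by_cases ht : t ∈ u
    · exact hγ t ht
    · exact HasFDerivWithinAt.of_notMem_closure (by rwa [hu.closure_eq])
  exact fun t _ ↦ (extend hs h t).union (extend hs' h' t)

/-- Picard–Lindelöf on the ball of radius `‖g x₀‖` around `x₀`: there `‖g‖ ≤ (1 + K) ‖g x₀‖`,
so the existence time `(1 + K)⁻¹` does not depend on `x₀`. -/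
lemma LipschitzWith.exists_eq_isIntegralCurveOn_Icc [CompleteSpace E] (hg : LipschitzWith K g)
    (t₀ : ℝ) (x₀ : E) :
    ∃ α : ℝ → E, α t₀ = x₀ ∧
      IsIntegralCurveOn α (fun _ ↦ g) (Icc (t₀ - (1 + K)⁻¹) (t₀ + (1 + K)⁻¹)) := by
  set a : NNReal := ‖g x₀‖₊
  have hbound : ∀ x ∈ Metric.closedBall x₀ a, ‖g x‖ ≤ (1 + K) * a := fun x hx ↦ calc
    ‖g x‖ ≤ dist (g x) (g x₀) + ‖g x₀‖ := dist_eq_norm (g x) _ ▸ norm_le_norm_sub_add _ _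
    _ ≤ K * a + a := add_le_add (hg.dist_le_mul_of_le hx) le_rfl
    _ = (1 + K) * a := by ring
  have hpl : IsPicardLindelof (fun _ ↦ g) (tmin := t₀ - (1 + K)⁻¹) (tmax := t₀ + (1 + K)⁻¹)
      ⟨t₀, by constructor <;> linarith [(1 + K)⁻¹.coe_nonneg]⟩ x₀ a 0 ((1 + K) * a) K :=
    IsPicardLindelof.of_time_independent hbound hg.lipschitzOnWith (by
      have : (1 + K) * a * (1 + K)⁻¹ = a := by field_simp
      simpa using congrArg ((↑) : NNReal → ℝ) this |>.le)
  exact hpl.exists_eq_forall_mem_Icc_hasDerivWithinAt₀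

theorem exists_eq_forall_nonneg_hasDerivAt_of_isIntegralCurveOn_Icc {v : ℝ → E → E} {ε : ℝ}
    (hε : 0 < ε) (hloc : ∀ (t₀ : ℝ) (x : E), ∃ α : ℝ → E, α t₀ = x ∧
      IsIntegralCurveOn α v (Icc (t₀ - ε) (t₀ + ε)))
    (x₀ : E) : ∃ γ : ℝ → E, γ 0 = x₀ ∧ ∀ t, 0 ≤ t → HasDerivAt γ (v t (γ t)) t := by
  choose α hα₀ hα using hloc
  -- `P k` is the state reached at time `k ε`, and `β k` the local solution started there.
  let P : ℕ → E := fun k ↦ Nat.rec x₀ (fun k p ↦ α (k * ε) p ((k + 1) * ε)) k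
  let β : ℕ → ℝ → E := fun k ↦ α (k * ε) (P k)
  have hβ_start (k : ℕ) : β k (k * ε) = P k := hα₀ _ _
  have hP_succ (k : ℕ) : P (k + 1) = β k ((k + 1) * ε) := rfl
  let γ : ℝ → E := fun t ↦ β ⌊t / ε⌋₊ t
  have hfloor {k : ℕ} {t : ℝ} (h₁ : k * ε ≤ t) (h₂ : t < (k + 1) * ε) : ⌊t / ε⌋₊ = k :=
    (Nat.floor_eq_iff (div_nonneg ((mul_nonneg k.cast_nonneg hε.le).trans h₁) hε.le)).mpr
      ⟨(le_div_iff₀ hε).mpr h₁, (div_lt_iff₀ hε).mpr h₂⟩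
  have hγβ (k : ℕ) : EqOn γ (β k) (Icc (k * ε) ((k + 1) * ε)) := by
    rintro t ⟨h₁, h₂⟩
    rcases h₂.lt_or_eq with h₂ | rfl
    · exact congrArg (β · t) (hfloor h₁ h₂)
    · have hk : ⌊(k + 1) * ε / ε⌋₊ = k + 1 :=
        hfloor (by push_cast; exact le_rfl) (by push_cast; linarith)
      exact (congrArg (β · _) hk).trans (by rw [← hP_succ]; exact_mod_cast hβ_start (k + 1))
  have hγβ₀ : EqOn γ (β 0) (Icc ((0 : ℕ) * ε - ε) ((0 : ℕ) * ε + ε)) := fun t ht ↦ by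
    simp only [Nat.cast_zero, zero_mul, zero_sub, zero_add, Set.mem_Icc] at ht
    rcases le_total t 0 with h | h
    · exact congrArg (β · t) (Nat.floor_of_nonpos (div_nonpos_of_nonpos_of_nonneg h hε.le))
    · exact hγβ 0 ⟨by simpa using h, by simpa using ht.2⟩
  have hγ (k : ℕ) : IsIntegralCurveOn γ v (Icc (k * ε - ε) (k * ε + ε)) := by
    induction k with
    | zero => exact (hα _ _).congr hγβ₀
    | succ k ih =>
      have hsplit : Icc ((k + 1 : ℕ) * ε - ε) ((k + 1 : ℕ) * ε + ε) =
          Icc (k * ε) ((k + 1) * ε) ∪ Icc ((k + 1 : ℕ) * ε) (((k + 1 : ℕ) + 1) * ε) := by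
        push_cast
        rw [Icc_union_Icc_eq_Icc (by linarith) (by linarith)]
        congr 1 <;> ring
      rw [hsplit]
      refine (ih.mono (Icc_subset_Icc (by linarith) (by linarith))).union
        (((hα _ _).mono (Icc_subset_Icc (by linarith) (by linarith))).congr (hγβ (k + 1)))
        isClosed_Icc isClosed_Icc
  have hγ₀ : γ 0 = β 0 0 := hγβ₀ ⟨by simp [hε.le], by simp [hε.le]⟩
  have hβ₀ : β 0 0 = P 0 := by simpa using hβ_start 0
  refine ⟨γ, hγ₀.trans hβ₀, ?_⟩
  intro t ht
  have h₁ : ⌊t / ε⌋₊ * ε ≤ t := (le_div_iff₀ hε).mp (Nat.floor_le (div_nonneg ht hε.le))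
  have h₂ : t < (⌊t / ε⌋₊ + 1) * ε := (div_lt_iff₀ hε).mp (Nat.lt_floor_add_one _)
  exact (hγ ⌊t / ε⌋₊ t ⟨by linarith, by linarith⟩).hasDerivAt
    (Icc_mem_nhds (by linarith) (by linarith))

lemma LipschitzWith.exists_eq_forall_nonneg_hasDerivAt [CompleteSpace E] (hg : LipschitzWith K g)
    (x₀ : E) :
    ∃ γ : ℝ → E, γ 0 = x₀ ∧ ∀ t, 0 ≤ t → HasDerivAt γ (g (γ t)) t :=
  exists_eq_forall_nonneg_hasDerivAt_of_isIntegralCurveOn_Icc (by positivity)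
    hg.exists_eq_isIntegralCurveOn_Icc x₀

lemma LipschitzWith.eqOn_Ici_of_forall_nonneg_hasDerivAt (hg : LipschitzWith K g)
    {γ γ' : ℝ → E} (hγ : ∀ t, 0 ≤ t → HasDerivAt γ (g (γ t)) t)
    (hγ' : ∀ t, 0 ≤ t → HasDerivAt γ' (g (γ' t)) t) (h₀ : γ 0 = γ' 0) : EqOn γ γ' (Ici 0) :=
  fun _ ht ↦ ODE_solution_unique (v := fun _ ↦ g) (fun _ ↦ hg)
    (HasDerivAt.continuousOn fun s hs ↦ hγ s hs.1) (fun s hs ↦ (hγ s hs.1).hasDerivWithinAt)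
    (HasDerivAt.continuousOn fun s hs ↦ hγ' s hs.1) (fun s hs ↦ (hγ' s hs.1).hasDerivWithinAt)
    h₀ ⟨ht, le_rfl⟩

end IntegralCurves

/-- The weighted-median operator is non-expanding in the sup norm; consequently
`f(x) = Med(x;W) - x` is globally Lipschitz and the CTWM dynamics has a unique
solution from every initial condition. -/
theorem med_nonexpanding_and_existence_uniqueness {n : ℕ}
    (W : Matrix (Fin n) (Fin n) ℝ) (hW : RowStochastic W)
    (Med : (Fin n → ℝ) → Fin n → ℝ) (hMed : IsMedSelection W Med) :
    (∀ x y : Fin n → ℝ, ‖Med x - Med y‖ ≤ ‖x - y‖) ∧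
    (∃ K : NNReal, LipschitzWith K (fun x : Fin n → ℝ => Med x - x)) ∧
    ∀ x0 : Fin n → ℝ,
      (∃ φ : ℝ → (Fin n → ℝ), φ 0 = x0 ∧
        ∀ t : ℝ, 0 ≤ t → HasDerivAt φ (Med (φ t) - φ t) t) ∧
      ∀ φ ψ : ℝ → (Fin n → ℝ),
        (φ 0 = x0 ∧ ∀ t : ℝ, 0 ≤ t → HasDerivAt φ (Med (φ t) - φ t) t) →
        (ψ 0 = x0 ∧ ∀ t : ℝ, 0 ≤ t → HasDerivAt ψ (Med (ψ t) - ψ t) t) →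
        ∀ t : ℝ, 0 ≤ t → φ t = ψ t := by
  have hf : LipschitzWith (1 + 1) fun x : Fin n → ℝ => Med x - x :=
    (hMed.lipschitzWith_one hW.1).sub LipschitzWith.id
  refine ⟨hMed.norm_sub_le hW.1, ⟨_, hf⟩, fun x₀ ↦ ⟨hf.exists_eq_forall_nonneg_hasDerivAt x₀, ?_⟩⟩
  intro φ ψ hφ hψ t ht
  exact hf.eqOn_Ici_of_forall_nonneg_hasDerivAt hφ.2 hψ.2 (hφ.1.trans hψ.1.symm) ht
end

section
/- Invariance for cohesive sets: if C ⊆ V is a cohesive set of the influence network G(W), then for any a ≤ b (possibly ±∞) the set X_{C,[a,b]} = {x ∈ ℝ^n : x_i ∈ [a,b] for all i ∈ C} is positively invariant for the CTWM dynamics. In particular, for every x ∈ ℝ^n, t ↦ max_{k∈C} φ_k(t,x) is non-increasing and t ↦ min_{k∈C} φ_k(t,x) is non-decreasing on t ≥ 0. -/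
/-!
If `i` maximizes `x` over the cohesive set `C`, the weight that row `i` puts on values above `x i`
lies outside `C`, hence is at most `1/2`; if moreover `Med x i > x i`, the weight on values below
`x i` is at most `1/2` as well. Then `x i` itself is a weighted median strictly closer to `x i`
than `Med x i`, contradicting the tie-breaking rule. So every maximizer over `C` has nonpositive
velocity, and a right Dini-derivative comparison shows that `max_C x` is non-increasing along
trajectories; symmetrically `min_C x` is non-decreasing, and invariance of the boxes follows.
-/

open Finset Filter Topology

lemma Finset.sup'_neg_eq_neg_inf' {ι α : Type*} [AddCommGroup α] [LinearOrder α] [IsOrderedAddMonoid α]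
    {s : Finset ι} (hs : s.Nonempty) (f : ι → α) :
    s.sup' hs (fun k => -f k) = -s.inf' hs f :=
  le_antisymm (sup'_le hs _ fun _ hk => neg_le_neg (inf'_le f hk))
    (neg_le.2 (le_inf' hs _ fun _ hk => neg_le.2 (le_sup' (fun k => -f k) hk)))

section SupOfDifferentiable

variable {ι : Type*} {s : Finset ι} (hs : s.Nonempty) {p : ι → ℝ → ℝ}

lemma eventually_slope_sup'_lt {d : ι → ℝ} {u r : ℝ} (hp : ∀ k ∈ s, HasDerivAt (p k) (d k) u)
    (hr : 0 < r) (hmax : ∀ k ∈ s, (∀ j ∈ s, p j u ≤ p k u) → d k ≤ 0) :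
    ∀ᶠ z in 𝓝[>] u, slope (fun t => s.sup' hs fun k => p k t) u z < r := by
  set g := fun t => s.sup' hs fun k => p k t
  have hbound : ∀ k ∈ s, ∀ᶠ z in 𝓝[>] u, p k z < g u + r * (z - u) := by
    intro k hk
    -- non-maximizers stay strictly below `g u` by continuity; maximizers move with slope `< r`
    rcases (le_sup' (fun j => p j u) hk).lt_or_eq with hlt | heq
    · have hnear := (hp k hk).continuousAt.eventually_lt continuousAt_const hlt
      filter_upwards [nhdsWithin_le_nhds hnear, self_mem_nhdsWithin] with z hz hzu
      nlinarith [Set.mem_Ioi.1 hzu]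
    · have hd : d k < r := (hmax k hk fun j hj => heq ▸ le_sup' (fun j => p j u) hj).trans_lt hr
      filter_upwards [(hp k hk).hasDerivWithinAt.limsup_slope_le' (lt_irrefl u) hd,
        self_mem_nhdsWithin] with z hz hzu
      rw [slope_def_field, div_lt_iff₀ (sub_pos.2 hzu)] at hz
      change p k u = g u at heq
      linarith
  filter_upwards [(eventually_all_finset s).2 hbound, self_mem_nhdsWithin] with z hz hzu
  rw [slope_def_field, div_lt_iff₀ (sub_pos.2 hzu), sub_lt_iff_lt_add']
  exact (sup'_lt_iff hs).2 hz

lemma antitone_sup'_of_hasDerivAt {d : ι → ℝ → ℝ} (hp : ∀ k ∈ s, ∀ t, HasDerivAt (p k) (d k t) t)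
    (hmax : ∀ t, ∀ k ∈ s, (∀ j ∈ s, p j t ≤ p k t) → d k t ≤ 0) :
    Antitone fun t => s.sup' hs fun k => p k t := by
  intro a b hab
  have hcont : Continuous fun t => s.sup' hs fun k => p k t :=
    Continuous.finset_sup'_apply hs fun k hk =>
      continuous_iff_continuousAt.2 fun t => (hp k hk t).continuousAt
  exact image_le_of_liminf_slope_right_le_deriv_boundary (B' := 0) hcont.continuousOn le_rfl
    continuousOn_const (fun _ _ => hasDerivWithinAt_const _ _ _)
    (fun u _ _ hr => (eventually_slope_sup'_lt hs (fun k hk => hp k hk u) hr (hmax u)).frequently)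
    ⟨hab, le_rfl⟩

lemma monotone_inf'_of_hasDerivAt {d : ι → ℝ → ℝ} (hp : ∀ k ∈ s, ∀ t, HasDerivAt (p k) (d k t) t)
    (hmin : ∀ t, ∀ k ∈ s, (∀ j ∈ s, p k t ≤ p j t) → 0 ≤ d k t) :
    Monotone fun t => s.inf' hs fun k => p k t := by
  have hneg := antitone_sup'_of_hasDerivAt hs (p := fun k t => -p k t) (d := fun k t => -d k t)
    (fun k hk t => (hp k hk t).neg)
    fun t k hk hmax => neg_nonpos.2 (hmin t k hk fun j hj => neg_le_neg_iff.1 (hmax j hj))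
  intro a b hab
  simpa only [sup'_neg_eq_neg_inf', neg_le_neg_iff] using hneg hab

end SupOfDifferentiable

section WeightedMedian

variable {n : ℕ} {x w : Fin n → ℝ} {W : Matrix (Fin n) (Fin n) ℝ}
  {Med : (Fin n → ℝ) → Fin n → ℝ} {C : Finset (Fin n)} {i : Fin n}

lemma sum_filter_lt_le_sum_filter_lt (hw : ∀ j, 0 ≤ w j) {m m' : ℝ} (h : m ≤ m') :
    ∑ j ∈ univ.filter (fun j => x j < m), w j ≤ ∑ j ∈ univ.filter (fun j => x j < m'), w j :=
  sum_le_sum_of_subset_of_nonneg (monotone_filter_right _ fun _ _ hj => hj.trans_le h)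
    fun j _ _ => hw j

lemma sum_filter_gt_le_sum_filter_gt (hw : ∀ j, 0 ≤ w j) {m m' : ℝ} (h : m ≤ m') :
    ∑ j ∈ univ.filter (fun j => m' < x j), w j ≤ ∑ j ∈ univ.filter (fun j => m < x j), w j :=
  sum_le_sum_of_subset_of_nonneg (monotone_filter_right _ fun _ _ hj => h.trans_lt hj)
    fun j _ _ => hw j

lemma IsMedSelection.eq_self_of_isWeightedMedian (hMed : IsMedSelection W Med)
    (h : IsWeightedMedian x (W i) (x i)) : Med x i = x i := by
  simpa [sub_eq_zero] using (hMed x i).2 _ h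

lemma Cohesive.sum_le_half_of_disjoint (hC : Cohesive W C) (hW : RowStochastic W) (hi : i ∈ C)
    {S : Finset (Fin n)} (hS : Disjoint S C) : ∑ j ∈ S, W i j ≤ 1 / 2 := by
  have hcover : ∑ j ∈ S, W i j + ∑ j ∈ C, W i j ≤ 1 := by
    rw [← sum_union hS, ← hW.2 i]
    exact sum_le_sum_of_subset_of_nonneg (subset_univ _) fun j _ _ => hW.1 i j
  linarith [hC i hi]

lemma med_le_of_forall_le (hW : RowStochastic W) (hMed : IsMedSelection W Med)
    (hC : Cohesive W C) (hi : i ∈ C) (hmax : ∀ j ∈ C, x j ≤ x i) : Med x i ≤ x i := by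
  by_contra! h
  refine h.ne' (hMed.eq_self_of_isWeightedMedian ⟨⟨i, rfl⟩, ?_, ?_⟩)
  · exact (sum_filter_lt_le_sum_filter_lt (hW.1 i) h.le).trans (hMed x i).1.2.1
  · exact hC.sum_le_half_of_disjoint hW hi <| disjoint_left.2 fun j hj hjC =>
      (hmax j hjC).not_gt (mem_filter.1 hj).2

lemma le_med_of_forall_ge (hW : RowStochastic W) (hMed : IsMedSelection W Med)
    (hC : Cohesive W C) (hi : i ∈ C) (hmin : ∀ j ∈ C, x i ≤ x j) : x i ≤ Med x i := by
  by_contra! h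
  refine h.ne (hMed.eq_self_of_isWeightedMedian ⟨⟨i, rfl⟩, ?_, ?_⟩)
  · exact hC.sum_le_half_of_disjoint hW hi <| disjoint_left.2 fun j hj hjC =>
      (hmin j hjC).not_gt (mem_filter.1 hj).2
  · exact (sum_filter_gt_le_sum_filter_gt (hW.1 i) h.le).trans (hMed x i).1.2.2

end WeightedMedian

/-- Invariance for cohesive sets: if `C` is cohesive, then for any (extended-real)
bounds `a ≤ b` the set `{x : xᵢ ∈ [a,b] ∀ i ∈ C}` is positively invariant for the
CTWM dynamics; in particular the max over `C` is non-increasing and the min over `C`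
is non-decreasing along trajectories. -/
theorem cohesive_set_invariance {n : ℕ}
    (W : Matrix (Fin n) (Fin n) ℝ) (hW : RowStochastic W)
    (Med : (Fin n → ℝ) → Fin n → ℝ) (hMed : IsMedSelection W Med)
    (φ : (Fin n → ℝ) → ℝ → (Fin n → ℝ))
    (hφ : IsFlow (fun x => Med x - x) φ)
    (C : Finset (Fin n)) (hC : Cohesive W C) :
    (∀ a b : EReal, a ≤ b →
      ∀ x0 : Fin n → ℝ, (∀ i ∈ C, a ≤ (x0 i : EReal) ∧ (x0 i : EReal) ≤ b) →
        ∀ t : ℝ, 0 ≤ t → ∀ i ∈ C, a ≤ (φ x0 t i : EReal) ∧ (φ x0 t i : EReal) ≤ b) ∧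
    ∀ (hCne : C.Nonempty) (x0 : Fin n → ℝ),
      (∀ s t : ℝ, 0 ≤ s → s ≤ t →
        C.sup' hCne (fun k => φ x0 t k) ≤ C.sup' hCne (fun k => φ x0 s k)) ∧
      (∀ s t : ℝ, 0 ≤ s → s ≤ t →
        C.inf' hCne (fun k => φ x0 s k) ≤ C.inf' hCne (fun k => φ x0 t k)) := by
  have hderiv : ∀ x0 k t, HasDerivAt (fun u => φ x0 u k) (Med (φ x0 t) k - φ x0 t k) t :=
    fun x0 k t => by simpa using hasDerivAt_pi.1 ((hφ x0).2 t) k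
  have hmax : ∀ hCne x0, Antitone fun t => C.sup' hCne fun k => φ x0 t k := fun hCne x0 =>
    antitone_sup'_of_hasDerivAt hCne (fun k _ t => hderiv x0 k t) fun _ _ hk hmax =>
      sub_nonpos.2 (med_le_of_forall_le hW hMed hC hk hmax)
  have hmin : ∀ hCne x0, Monotone fun t => C.inf' hCne fun k => φ x0 t k := fun hCne x0 =>
    monotone_inf'_of_hasDerivAt hCne (fun k _ t => hderiv x0 k t) fun _ _ hk hmin =>
      sub_nonneg.2 (le_med_of_forall_ge hW hMed hC hk hmin)
  refine ⟨fun a b _ x0 hx0 t ht i hi => ?_,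
    fun hCne x0 => ⟨fun _ _ _ hst => hmax hCne x0 hst, fun _ _ _ hst => hmin hCne x0 hst⟩⟩
  have hCne : C.Nonempty := ⟨i, hi⟩
  obtain ⟨j, hj, hjmin⟩ := exists_mem_eq_inf' hCne x0
  obtain ⟨l, hl, hlmax⟩ := exists_mem_eq_sup' hCne x0
  have h0 : (fun k => φ x0 0 k) = x0 := (hφ x0).1
  have hlow : x0 j ≤ φ x0 t i := by
    calc x0 j = C.inf' hCne fun k => φ x0 0 k := by rw [h0, hjmin]
      _ ≤ C.inf' hCne fun k => φ x0 t k := hmin hCne x0 ht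
      _ ≤ φ x0 t i := inf'_le _ hi
  have hhigh : φ x0 t i ≤ x0 l := by
    calc φ x0 t i ≤ C.sup' hCne fun k => φ x0 t k := le_sup' (fun k => φ x0 t k) hi
      _ ≤ C.sup' hCne fun k => φ x0 0 k := hmax hCne x0 ht
      _ = x0 l := by rw [h0, hlmax]
  exact ⟨(hx0 j hj).1.trans (EReal.coe_le_coe_iff.2 hlow),
    (EReal.coe_le_coe_iff.2 hhigh).trans (hx0 l hl).2⟩
end

section
/- Characterization of equilibria of the CTWM dynamics: a point x ∈ ℝ^n satisfies Med(x;W) = x (equivalently, f(x) = 0) if and only if x ∈ X_eq, i.e., if and only if order^{≤r}(x) is a maximal cohesive set of G(W) for every r ∈ {1,…,N_diff(x)}. -/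
open Finset Filter Topology

/-!
By the tie-breaking rule, `Med x i = x i` exactly when `x i` is itself a weighted median of `x`
for row `i`, i.e. row `i` puts weight at least `1/2` on `{j | x i ≤ x j}` and at most `1/2` on
`{j | x i < x j}`. The sets `order^{≤r}(x)` are precisely these weak and strict upper level sets
of `x`, so the two inequalities over all `i` amount to cohesiveness and maximality of every
`order^{≤r}(x)`.
-/

section WeightedMedian

variable {n : ℕ}

theorem isWeightedMedian_self_iff {x w : Fin n → ℝ} (hw : ∑ j, w j = 1) (i : Fin n) :
    IsWeightedMedian x w (x i) ↔
      1 / 2 ≤ ∑ j ∈ univ.filter (fun j => x i ≤ x j), w j ∧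
        ∑ j ∈ univ.filter (fun j => x i < x j), w j ≤ 1 / 2 := by
  have hsplit := sum_filter_add_sum_filter_not univ (fun j => x j < x i) w
  simp only [not_lt, hw] at hsplit
  constructor
  · rintro ⟨-, hbelow, habove⟩
    exact ⟨by linarith, habove⟩
  · rintro ⟨hweak, habove⟩
    exact ⟨⟨i, rfl⟩, by linarith, habove⟩

theorem IsMedSelection.apply_eq_self_iff {W : Matrix (Fin n) (Fin n) ℝ}
    {Med : (Fin n → ℝ) → Fin n → ℝ} (hMed : IsMedSelection W Med) (x : Fin n → ℝ) (i : Fin n) :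
    Med x i = x i ↔ IsWeightedMedian x (W i) (x i) := by
  refine ⟨fun h => h ▸ (hMed x i).1, fun h => ?_⟩
  have hclosest := (hMed x i).2 (x i) h
  rw [sub_self, abs_zero] at hclosest
  exact sub_eq_zero.mp (abs_nonpos_iff.mp hclosest)

end WeightedMedian

section OrderLe

variable {n : ℕ} {x : Fin n → ℝ}

noncomputable def numValuesAbove (x : Fin n → ℝ) (i : Fin n) : ℕ :=
  ((univ.image x).filter (fun v => x i < v)).card

theorem mem_orderLe {r : ℕ} {j : Fin n} : j ∈ orderLe x r ↔ numValuesAbove x j < r := by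
  simp [orderLe, numValuesAbove]

theorem orderLe_zero : orderLe x 0 = ∅ := by
  ext j
  simp [mem_orderLe]

theorem orderLe_mono : Monotone (orderLe x) :=
  fun _ _ hrs _ hj => mem_orderLe.mpr ((mem_orderLe.mp hj).trans_le hrs)

theorem numValuesAbove_lt_numValuesAbove_iff {i j : Fin n} :
    numValuesAbove x j < numValuesAbove x i ↔ x i < x j := by
  have hx_mem : ∀ k, x k ∈ univ.image x := fun k => mem_image_of_mem x (mem_univ k)
  constructor
  · intro h
    by_contra! hji
    exact h.not_ge (card_le_card (monotone_filter_right _ fun v _ hv => hji.trans_lt hv))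
  · intro hij
    refine card_lt_card ((ssubset_iff_of_subset
      (monotone_filter_right _ fun v _ hv => hij.trans hv)).mpr ⟨x j, ?_, ?_⟩)
    · exact mem_filter.mpr ⟨hx_mem j, hij⟩
    · exact fun h => lt_irrefl _ (mem_filter.mp h).2

theorem numValuesAbove_le_numValuesAbove_iff {i j : Fin n} :
    numValuesAbove x j ≤ numValuesAbove x i ↔ x i ≤ x j := by
  rw [← not_lt, ← not_lt, numValuesAbove_lt_numValuesAbove_iff]

theorem numValuesAbove_lt_card (i : Fin n) : numValuesAbove x i < (univ.image x).card :=
  card_lt_card ((ssubset_iff_of_subset (filter_subset _ _)).mpr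
    ⟨x i, mem_image_of_mem x (mem_univ i), fun h => lt_irrefl _ (mem_filter.mp h).2⟩)

theorem orderLe_numValuesAbove (i : Fin n) :
    orderLe x (numValuesAbove x i) = univ.filter (fun j => x i < x j) := by
  ext j
  simp [mem_orderLe, numValuesAbove_lt_numValuesAbove_iff]

theorem orderLe_numValuesAbove_add_one (i : Fin n) :
    orderLe x (numValuesAbove x i + 1) = univ.filter (fun j => x i ≤ x j) := by
  ext j
  simp [mem_orderLe, numValuesAbove_le_numValuesAbove_iff]

theorem filter_le_subset_orderLe {r : ℕ} {i : Fin n} (hi : i ∈ orderLe x r) :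
    univ.filter (fun j => x i ≤ x j) ⊆ orderLe x r :=
  orderLe_numValuesAbove_add_one i ▸ orderLe_mono (mem_orderLe.mp hi)

theorem orderLe_subset_filter_lt {r : ℕ} {i : Fin n} (hi : i ∉ orderLe x r) :
    orderLe x r ⊆ univ.filter (fun j => x i < x j) :=
  orderLe_numValuesAbove i ▸ orderLe_mono (not_lt.mp (mt mem_orderLe.mpr hi))

end OrderLe

section Equilibria

variable {n : ℕ} {W : Matrix (Fin n) (Fin n) ℝ} {x : Fin n → ℝ}

theorem maxCohesive_empty : MaxCohesive W ∅ :=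
  ⟨fun _ h => absurd h (notMem_empty _), fun _ _ => by simp⟩

theorem maxCohesive_orderLe_of_isWeightedMedian (hW : RowStochastic W)
    (hmed : ∀ i, IsWeightedMedian x (W i) (x i)) (r : ℕ) : MaxCohesive W (orderLe x r) := by
  have hmed' := fun i => (isWeightedMedian_self_iff (hW.2 i) i).mp (hmed i)
  refine ⟨fun i hi => ?_, fun i hi => not_lt.mpr ?_⟩
  · exact (hmed' i).1.trans
      (sum_le_sum_of_subset_of_nonneg (filter_le_subset_orderLe hi) fun j _ _ => hW.1 i j)
  · exact (sum_le_sum_of_subset_of_nonneg (orderLe_subset_filter_lt hi)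
      fun j _ _ => hW.1 i j).trans (hmed' i).2

theorem maxCohesive_orderLe_of_mem_Xeq (hx : x ∈ Xeq W) {r : ℕ}
    (hr : r ≤ (univ.image x).card) : MaxCohesive W (orderLe x r) := by
  rcases Nat.eq_zero_or_pos r with rfl | hpos
  · exact orderLe_zero ▸ maxCohesive_empty
  · exact hx r hpos hr

theorem isWeightedMedian_self_of_mem_Xeq (hW : ∀ i, ∑ j, W i j = 1) (hx : x ∈ Xeq W)
    (i : Fin n) : IsWeightedMedian x (W i) (x i) := by
  have hweak := maxCohesive_orderLe_of_mem_Xeq hx (numValuesAbove_lt_card i)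
  have hstrict := maxCohesive_orderLe_of_mem_Xeq hx (numValuesAbove_lt_card i).le
  rw [orderLe_numValuesAbove_add_one] at hweak
  rw [orderLe_numValuesAbove] at hstrict
  refine (isWeightedMedian_self_iff (hW i) i).mpr ⟨hweak.1 i (by simp), not_lt.mp ?_⟩
  exact hstrict.2 i (by simp)

end Equilibria

/-- Characterization of the equilibria of the CTWM dynamics: `Med(x;W) = x` if and only
if `order^{≤r}(x)` is a maximal cohesive set for every `r ∈ {1,…,N_diff(x)}`. -/
theorem ctwm_equilibria_characterization {n : ℕ}
    (W : Matrix (Fin n) (Fin n) ℝ) (hW : RowStochastic W)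
    (Med : (Fin n → ℝ) → Fin n → ℝ) (hMed : IsMedSelection W Med)
    (x : Fin n → ℝ) :
    Med x = x ↔ x ∈ Xeq W := by
  simp only [funext_iff, hMed.apply_eq_self_iff]
  exact ⟨fun hmed r _ _ => maxCohesive_orderLe_of_isWeightedMedian hW hmed r,
    isWeightedMedian_self_of_mem_Xeq hW.2⟩
end

section
/- Global convergence of the CTWM dynamics: for every initial condition x0 ∈ ℝ^n there exists an equilibrium x* ∈ X_eq (depending on x0) such that the solution φ(t,x0) converges to x* as t → ∞. -/
open Finset Filter Topology

/-!
The median operator is monotone and commutes with adding constants, so the CTWM flow is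
nonexpansive in the sup norm and trajectories are bounded. Let `s l` be the limsup of entry `l`
of a trajectory; entry `i` is shown to converge to `s i` by induction from the largest limsups
down. Take an ω-limit point `p` whose flow has entry `i` equal to `s i` at time `1`. Along that
flow every entry stays at most its limsup, and the entries at or above `s i` at time `1` sit
exactly at their limsups (by induction for larger limsups), hence at local maxima: their
velocity vanishes, so each is its own median and half of its influence lies at or above it.
That super-level set is therefore cohesive, and the entries of a cohesive set never drop below
a common lower bound. By nonexpansiveness the trajectory follows the flow through `p` after it
comes close to `p`, so entry `i` eventually stays above `s i - ε`.

At the limit `xs`, each `xs i` is a weighted median of its own row, since otherwise entry `i`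
would drift at a uniform rate; this places `xs` in `X_eq`.
-/

theorem sum_filter_le_sum_filter_of_imp_s11 {ι : Type*} [Fintype ι] {w : ι → ℝ}
    (hw : ∀ l, 0 ≤ w l) {p q : ι → Prop} [DecidablePred p] [DecidablePred q]
    (h : ∀ l, p l → q l) : ∑ l with p l, w l ≤ ∑ l with q l, w l :=
  sum_le_sum_of_subset_of_nonneg (monotone_filter_right _ fun l _ => h l) fun l _ _ => hw l

section WeightedMedian

variable {n : ℕ}

theorem IsWeightedMedian.lt_of_half_lt_sum_lt {x w : Fin n → ℝ} {m y : ℝ}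
    (hm : IsWeightedMedian x w m) (hw : ∀ l, 0 ≤ w l) (h : 1 / 2 < ∑ l with x l < y, w l) :
    m < y := by
  by_contra! hy
  have := sum_filter_le_sum_filter_of_imp_s11 hw fun l (hl : x l < y) => hl.trans_le hy
  linarith [hm.2.1]

theorem IsWeightedMedian.lt_of_half_lt_sum_gt {x w : Fin n → ℝ} {m y : ℝ}
    (hm : IsWeightedMedian x w m) (hw : ∀ l, 0 ≤ w l) (h : 1 / 2 < ∑ l with y < x l, w l) :
    y < m := by
  by_contra! hy
  have := sum_filter_le_sum_filter_of_imp_s11 hw fun l (hl : y < x l) => hy.trans_lt hl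
  linarith [hm.2.2]

theorem RowStochastic.sum_lt_le_half_iff {W : Matrix (Fin n) (Fin n) ℝ} (hW : RowStochastic W)
    (i : Fin n) (x : Fin n → ℝ) (y : ℝ) :
    ∑ l with x l < y, W i l ≤ 1 / 2 ↔ 1 / 2 ≤ ∑ l with y ≤ x l, W i l := by
  have := sum_filter_add_sum_filter_not univ (fun l => x l < y) (W i)
  simp only [not_lt, hW.2 i] at this
  constructor <;> intro <;> linarith

variable {W : Matrix (Fin n) (Fin n) ℝ} {Med : (Fin n → ℝ) → Fin n → ℝ}

theorem le_med_of_sum_lt_le_half (hW : RowStochastic W) (hMed : IsMedSelection W Med)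
    {x : Fin n → ℝ} {i : Fin n} {y : ℝ} (h : ∑ l with x l < y, W i l ≤ 1 / 2) (hyi : y ≤ x i) :
    y ≤ Med x i := by
  by_contra! hlt
  rcases le_or_gt (∑ l with y < x l, W i l) (1 / 2) with hup | hup
  · -- the smallest entry `≥ y` is then a weighted median closer to `x i`
    obtain ⟨v, hv, hvmin⟩ := exists_min_image (univ.filter fun l => y ≤ x l) x ⟨i, by simpa⟩
    simp only [mem_filter, mem_univ, true_and] at hv hvmin
    have hmed : IsWeightedMedian x (W i) (x v) := by
      refine ⟨⟨v, rfl⟩, ?_, ?_⟩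
      · refine (sum_filter_le_sum_filter_of_imp_s11 (hW.1 i) fun l hl => ?_).trans h
        by_contra! hyl
        exact (hvmin l hyl).not_gt hl
      · exact (sum_filter_le_sum_filter_of_imp_s11 (hW.1 i) fun l hl => hv.trans_lt hl).trans hup
    have hclose := (hMed x i).2 _ hmed
    rw [abs_of_nonpos (by linarith), abs_of_nonpos (by linarith [hvmin i hyi])] at hclose
    linarith
  · exact hlt.not_gt ((hMed x i).1.lt_of_half_lt_sum_gt (hW.1 i) hup)

theorem med_le_of_sum_gt_le_half (hW : RowStochastic W) (hMed : IsMedSelection W Med)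
    {x : Fin n → ℝ} {i : Fin n} {y : ℝ} (h : ∑ l with y < x l, W i l ≤ 1 / 2) (hyi : x i ≤ y) :
    Med x i ≤ y := by
  by_contra! hlt
  rcases le_or_gt (∑ l with x l < y, W i l) (1 / 2) with hlo | hlo
  · -- the largest entry `≤ y` is then a weighted median closer to `x i`
    obtain ⟨v, hv, hvmax⟩ := exists_max_image (univ.filter fun l => x l ≤ y) x ⟨i, by simpa⟩
    simp only [mem_filter, mem_univ, true_and] at hv hvmax
    have hmed : IsWeightedMedian x (W i) (x v) := by
      refine ⟨⟨v, rfl⟩, ?_, ?_⟩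
      · exact (sum_filter_le_sum_filter_of_imp_s11 (hW.1 i) fun l hl => hl.trans_le hv).trans hlo
      · refine (sum_filter_le_sum_filter_of_imp_s11 (hW.1 i) fun l hl => ?_).trans h
        by_contra! hyl
        exact (hvmax l hyl).not_gt hl
    have hclose := (hMed x i).2 _ hmed
    rw [abs_of_nonneg (by linarith), abs_of_nonneg (by linarith [hvmax i hyi])] at hclose
    linarith
  · exact hlt.not_gt ((hMed x i).1.lt_of_half_lt_sum_lt (hW.1 i) hlo)

theorem med_le_med_add (hW : RowStochastic W) (hMed : IsMedSelection W Med) {x z : Fin n → ℝ}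
    {δ : ℝ} (hxz : ∀ l, x l ≤ z l + δ) (i : Fin n) : Med x i ≤ Med z i + δ := by
  by_contra! hlt
  rcases le_or_gt (x i) (Med z i + δ) with hxi | hxi
  · have hup : ∑ l with Med z i + δ < x l, W i l ≤ 1 / 2 :=
      (sum_filter_le_sum_filter_of_imp_s11 (hW.1 i) fun l hl => by linarith [hxz l]).trans
        (hMed z i).1.2.2
    exact hlt.not_ge (med_le_of_sum_gt_le_half hW hMed hup hxi)
  · set θ := min (Med x i) (x i)
    have hθ : Med z i + δ < θ := lt_min hlt hxi
    have hlo : ∑ l with z l < θ - δ, W i l ≤ 1 / 2 :=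
      (sum_filter_le_sum_filter_of_imp_s11 (hW.1 i) fun l hl => by
        linarith [hxz l, min_le_left (Med x i) (x i)]).trans (hMed x i).1.2.1
    have := le_med_of_sum_lt_le_half hW hMed hlo (by linarith [hxz i, min_le_right (Med x i) (x i)])
    linarith

end WeightedMedian

theorem lt_of_hasDerivAt_le_sub {u u' : ℝ → ℝ} {a b c : ℝ} (hu : ∀ t, HasDerivAt u (u' t) t)
    (hab : a ≤ b) (hbound : ∀ t ∈ Set.Ico a b, u' t ≤ c - u t) (ha : u a < c) : u b < c := by
  have hgron := le_gronwallBound_of_liminf_deriv_right_le (f := fun t => u t - c) (K := -1)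
    (ε := 0) (fun t _ => ((hu t).sub_const c).continuousAt.continuousWithinAt)
    (fun t _ r hr => ((hu t).sub_const c).hasDerivWithinAt.liminf_right_slope_le hr) le_rfl
    (fun t ht => by linarith [hbound t ht]) b ⟨hab, le_rfl⟩
  rw [gronwallBound_ε0] at hgron
  nlinarith [Real.exp_pos (-1 * (b - a))]

theorem forall_lt_of_hasDerivAt_le_sub {ι : Type*} (C : Finset ι) {u u' : ι → ℝ → ℝ}
    {c t₀ : ℝ} (hu : ∀ l ∈ C, ∀ t, HasDerivAt (u l) (u' l t) t)
    (hbound : ∀ t, t₀ ≤ t → (∀ l ∈ C, u l t < c) → ∀ l ∈ C, u' l t ≤ c - u l t)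
    (h₀ : ∀ l ∈ C, u l t₀ < c) {t : ℝ} (ht : t₀ ≤ t) : ∀ l ∈ C, u l t < c := by
  by_contra! hbad
  set A := Set.Icc t₀ t ∩ ⋃ l ∈ C, {s | c ≤ u l s}
  have hA : IsCompact A := isCompact_Icc.inter_right <| isClosed_biUnion_finset fun l hl =>
    isClosed_le continuous_const (continuous_iff_continuousAt.2 fun s => (hu l hl s).continuousAt)
  obtain ⟨l, hl, hlt⟩ := hbad
  -- `t₁` is the first time at which some `u k` reaches `c`
  obtain ⟨t₁, ⟨⟨ht₀₁, ht₁⟩, hexit⟩, hfirst⟩ :=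
    hA.exists_isLeast ⟨t, ⟨⟨ht, le_rfl⟩, Set.mem_biUnion hl hlt⟩⟩
  have hbefore : ∀ s ∈ Set.Ico t₀ t₁, ∀ k ∈ C, u k s < c := fun s hs k hk => by
    by_contra! hks
    exact hs.2.not_ge (hfirst ⟨⟨hs.1, hs.2.le.trans ht₁⟩, Set.mem_biUnion hk hks⟩)
  obtain ⟨k, hk, hkc⟩ := Set.mem_iUnion₂.1 hexit
  exact (lt_of_hasDerivAt_le_sub (hu k hk) ht₀₁
    (fun s hs => hbound s hs.1 (hbefore s hs) k hk) (h₀ k hk)).not_ge hkc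

theorem tendsto_atTop_of_hasDerivAt_ge {f f' : ℝ → ℝ} (hf : ∀ t, HasDerivAt f (f' t) t) {ε : ℝ}
    (hε : 0 < ε) (h : ∀ᶠ t in atTop, ε ≤ f' t) : Tendsto f atTop atTop := by
  obtain ⟨T, hT⟩ := eventually_atTop.1 h
  have hlin := (convex_Ici T).mul_sub_le_image_sub_of_le_deriv
    (fun t _ => (hf t).continuousAt.continuousWithinAt)
    (fun t _ => (hf t).differentiableAt.differentiableWithinAt)
    (fun t ht => (hf t).deriv ▸ hT t (interior_subset ht)) T Set.self_mem_Ici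
  have hline : Tendsto (fun t => f T + ε * (t + -T)) atTop atTop :=
    tendsto_atTop_add_const_left _ _
      ((tendsto_atTop_add_const_right _ _ tendsto_id).const_mul_atTop hε)
  refine tendsto_atTop_mono' atTop (eventually_ge_atTop T |>.mono fun t ht => ?_) hline
  linarith [hlin t ht ht]

def IsCTWMSolution {n : ℕ} (Med : (Fin n → ℝ) → Fin n → ℝ) (X : ℝ → Fin n → ℝ) : Prop :=
  ∀ t, HasDerivAt X (Med (X t) - X t) t

theorem isCTWMSolution_zero {n : ℕ} {W : Matrix (Fin n) (Fin n) ℝ}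
    {Med : (Fin n → ℝ) → Fin n → ℝ} (hMed : IsMedSelection W Med) :
    IsCTWMSolution Med fun _ => 0 := fun t => by
  have : Med 0 = 0 := funext fun i => by
    obtain ⟨⟨j, hj⟩, -⟩ := (hMed 0 i).1
    exact hj.symm
  simpa [this] using hasDerivAt_const t (0 : Fin n → ℝ)

namespace IsCTWMSolution

variable {n : ℕ} {W : Matrix (Fin n) (Fin n) ℝ} {Med : (Fin n → ℝ) → Fin n → ℝ}
  {X Z : ℝ → Fin n → ℝ}

theorem hasDerivAt_apply (hX : IsCTWMSolution Med X) (t : ℝ) (i : Fin n) :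
    HasDerivAt (fun s => X s i) (Med (X t) i - X t i) t :=
  hasDerivAt_pi.1 (hX t) i

theorem comp_add_const (hX : IsCTWMSolution Med X) (a : ℝ) :
    IsCTWMSolution Med fun t => X (t + a) :=
  fun t => (hX (t + a)).comp_add_const t a

theorem sub_lt_of_sub_lt (hW : RowStochastic W) (hMed : IsMedSelection W Med)
    (hX : IsCTWMSolution Med X) (hZ : IsCTWMSolution Med Z) {c t₀ t : ℝ}
    (h₀ : ∀ l, X t₀ l - Z t₀ l < c) (ht : t₀ ≤ t) (l : Fin n) : X t l - Z t l < c :=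
  forall_lt_of_hasDerivAt_le_sub univ (u := fun l t => X t l - Z t l)
    (fun l _ t => (hX.hasDerivAt_apply t l).sub (hZ.hasDerivAt_apply t l))
    (fun s _ hs k _ => by
      have := med_le_med_add hW hMed (x := X s) (z := Z s) (δ := c)
        (fun j => by linarith [hs j (mem_univ j)]) k
      linarith)
    (fun k _ => h₀ k) ht l (mem_univ l)

theorem dist_le (hW : RowStochastic W) (hMed : IsMedSelection W Med)
    (hX : IsCTWMSolution Med X) (hZ : IsCTWMSolution Med Z) {t₀ t : ℝ} (ht : t₀ ≤ t) :
    dist (X t) (Z t) ≤ dist (X t₀) (Z t₀) := by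
  refine le_of_forall_pos_lt_add fun ε hε => (dist_pi_lt_iff (by positivity)).2 fun l => ?_
  have h₀ : ∀ k, |X t₀ k - Z t₀ k| < dist (X t₀) (Z t₀) + ε := fun k => by
    rw [← Real.dist_eq]
    linarith [dist_le_pi_dist (X t₀) (Z t₀) k]
  rw [Real.dist_eq, abs_sub_lt_iff]
  exact ⟨hX.sub_lt_of_sub_lt hW hMed hZ (fun k => (abs_lt.1 (h₀ k)).2) ht l,
    hZ.sub_lt_of_sub_lt hW hMed hX (fun k => by linarith [(abs_lt.1 (h₀ k)).1]) ht l⟩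

theorem norm_le (hW : RowStochastic W) (hMed : IsMedSelection W Med)
    (hX : IsCTWMSolution Med X) {t₀ t : ℝ} (ht : t₀ ≤ t) : ‖X t‖ ≤ ‖X t₀‖ := by
  simpa using hX.dist_le hW hMed (isCTWMSolution_zero hMed) ht

/-- Each member of `C` keeps at least half of its influence at or above the level, so its median
never pulls it below. -/
theorem le_of_cohesive (hW : RowStochastic W) (hMed : IsMedSelection W Med)
    (hX : IsCTWMSolution Med X) {C : Finset (Fin n)} (hC : Cohesive W C) {y t₀ t : ℝ}
    (h₀ : ∀ l ∈ C, y ≤ X t₀ l) (ht : t₀ ≤ t) {l : Fin n} (hl : l ∈ C) : y ≤ X t l := by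
  refine le_of_forall_pos_lt_add fun ε hε => ?_
  have := forall_lt_of_hasDerivAt_le_sub C (u := fun l t => y - X t l) (c := ε)
    (fun l _ t => (hX.hasDerivAt_apply t l).const_sub y)
    (fun s _ hs j hj => by
      have hmass : ∑ k with X s k < y - ε, W j k ≤ 1 / 2 :=
        (hW.sum_lt_le_half_iff j _ _).2 <| (hC j hj).trans <|
          sum_le_sum_of_subset_of_nonneg (fun k hk => by simpa using (by linarith [hs k hk]))
            fun k _ _ => hW.1 j k
      have := le_med_of_sum_lt_le_half hW hMed hmass (by linarith [hs j hj])
      linarith)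
    (fun k hk => by linarith [h₀ k hk]) ht l hl
  linarith

theorem half_le_sum_of_isLocalMax (hW : RowStochastic W) (hMed : IsMedSelection W Med)
    (hX : IsCTWMSolution Med X) {t : ℝ} {j : Fin n} (hmax : IsLocalMax (fun s => X s j) t) :
    1 / 2 ≤ ∑ l with X t j ≤ X t l, W j l := by
  have hfix : Med (X t) j = X t j :=
    sub_eq_zero.1 (hmax.hasDerivAt_eq_zero (hX.hasDerivAt_apply t j))
  have hlo := (hMed (X t) j).1.2.1
  rw [hfix] at hlo
  exact (hW.sum_lt_le_half_iff j _ _).1 hlo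

theorem cohesive_of_isLocalMax (hW : RowStochastic W) (hMed : IsMedSelection W Med)
    (hX : IsCTWMSolution Med X) {t y : ℝ}
    (hmax : ∀ l, y ≤ X t l → IsLocalMax (fun s => X s l) t) :
    Cohesive W (univ.filter fun l => y ≤ X t l) := fun j hj => by
  have hyj : y ≤ X t j := by simpa using hj
  exact (hX.half_le_sum_of_isLocalMax hW hMed (hmax j hyj)).trans <|
    sum_filter_le_sum_filter_of_imp_s11 (hW.1 j) fun l hl => hyj.trans hl

end IsCTWMSolution

section Equilibria

variable {n : ℕ} {W : Matrix (Fin n) (Fin n) ℝ} {Med : (Fin n → ℝ) → Fin n → ℝ}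

theorem eventually_med_sub_lt_neg (hW : RowStochastic W) (hMed : IsMedSelection W Med)
    {xs : Fin n → ℝ} {i : Fin n} (h : 1 / 2 < ∑ l with xs l < xs i, W i l) :
    ∃ ε > 0, ∀ᶠ x in 𝓝 xs, Med x i - x i < -ε := by
  have hgap : ∀ᶠ y in 𝓝[<] xs i, ∀ l, xs l < xs i → xs l < y :=
    eventually_all.2 fun l => eventually_imp_distrib_left.2 fun hl =>
      (eventually_gt_nhds hl).filter_mono nhdsWithin_le_nhds
  obtain ⟨y, hy, hyi : y < xs i⟩ := (hgap.and self_mem_nhdsWithin).exists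
  have hnear : ∀ᶠ x in 𝓝 xs, (∀ l, xs l < xs i → x l < y) ∧ (xs i + y) / 2 < x i :=
    (eventually_all.2 fun l => eventually_imp_distrib_left.2 fun hl =>
      (continuous_apply l).continuousAt.eventually (eventually_lt_nhds (hy l hl))).and
    ((continuous_apply i).continuousAt.eventually (eventually_gt_nhds (by linarith)))
  refine ⟨(xs i - y) / 2, by linarith, ?_⟩
  filter_upwards [hnear] with x ⟨hlow, hxi⟩
  have := (hMed x i).1.lt_of_half_lt_sum_lt (hW.1 i)
    (h.trans_le (sum_filter_le_sum_filter_of_imp_s11 (hW.1 i) hlow))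
  linarith

theorem eventually_lt_med_sub (hW : RowStochastic W) (hMed : IsMedSelection W Med)
    {xs : Fin n → ℝ} {i : Fin n} (h : 1 / 2 < ∑ l with xs i < xs l, W i l) :
    ∃ ε > 0, ∀ᶠ x in 𝓝 xs, ε < Med x i - x i := by
  have hgap : ∀ᶠ y in 𝓝[>] xs i, ∀ l, xs i < xs l → y < xs l :=
    eventually_all.2 fun l => eventually_imp_distrib_left.2 fun hl =>
      (eventually_lt_nhds hl).filter_mono nhdsWithin_le_nhds
  obtain ⟨y, hy, hyi : xs i < y⟩ := (hgap.and self_mem_nhdsWithin).exists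
  have hnear : ∀ᶠ x in 𝓝 xs, (∀ l, xs i < xs l → y < x l) ∧ x i < (xs i + y) / 2 :=
    (eventually_all.2 fun l => eventually_imp_distrib_left.2 fun hl =>
      (continuous_apply l).continuousAt.eventually (eventually_gt_nhds (hy l hl))).and
    ((continuous_apply i).continuousAt.eventually (eventually_lt_nhds (by linarith)))
  refine ⟨(y - xs i) / 2, by linarith, ?_⟩
  filter_upwards [hnear] with x ⟨hhigh, hxi⟩
  have := (hMed x i).1.lt_of_half_lt_sum_gt (hW.1 i)
    (h.trans_le (sum_filter_le_sum_filter_of_imp_s11 (hW.1 i) hhigh))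
  linarith

theorem IsCTWMSolution.isWeightedMedian_of_tendsto (hW : RowStochastic W)
    (hMed : IsMedSelection W Med) {X : ℝ → Fin n → ℝ} (hX : IsCTWMSolution Med X)
    {xs : Fin n → ℝ} (hconv : Tendsto X atTop (𝓝 xs)) (i : Fin n) :
    IsWeightedMedian xs (W i) (xs i) := by
  have hXi : Tendsto (fun t => X t i) atTop (𝓝 (xs i)) := tendsto_pi_nhds.1 hconv i
  refine ⟨⟨i, rfl⟩, ?_, ?_⟩ <;> by_contra! h
  · obtain ⟨ε, hε, hev⟩ := eventually_med_sub_lt_neg hW hMed h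
    refine not_tendsto_atTop_of_tendsto_nhds hXi.neg <| tendsto_atTop_of_hasDerivAt_ge
      (fun t => (hX.hasDerivAt_apply t i).neg) hε ?_
    exact (hconv.eventually hev).mono fun t ht => by linarith
  · obtain ⟨ε, hε, hev⟩ := eventually_lt_med_sub hW hMed h
    exact not_tendsto_atTop_of_tendsto_nhds hXi <| tendsto_atTop_of_hasDerivAt_ge
      (hX.hasDerivAt_apply · i) hε <| (hconv.eventually hev).mono fun t ht => ht.le

theorem mem_orderLe_of_le {x : Fin n → ℝ} {r : ℕ} {i l : Fin n} (h : x i ≤ x l)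
    (hi : i ∈ orderLe x r) : l ∈ orderLe x r := by
  simp only [orderLe, mem_filter, mem_univ, true_and] at hi ⊢
  exact (card_le_card (monotone_filter_right _ fun v _ hv => h.trans_lt hv)).trans_lt hi

theorem mem_Xeq_of_forall_isWeightedMedian (hW : RowStochastic W) {x : Fin n → ℝ}
    (h : ∀ i, IsWeightedMedian x (W i) (x i)) : x ∈ Xeq W := by
  refine fun r _ _ => ⟨fun i hi => ?_, fun i hi hgt => ?_⟩
  · exact ((hW.sum_lt_le_half_iff i x (x i)).1 (h i).2.1).trans <|
      sum_le_sum_of_subset_of_nonneg (fun l hl => mem_orderLe_of_le (by simpa using hl) hi)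
        fun l _ _ => hW.1 i l
  · refine hgt.not_ge <| le_trans (sum_le_sum_of_subset_of_nonneg (fun l hl => ?_)
      fun l _ _ => hW.1 i l) (h i).2.2
    simpa using lt_of_not_ge fun hli => hi (mem_orderLe_of_le hli hl)

end Equilibria

section OmegaLimit

variable {n : ℕ} {X : ℝ → Fin n → ℝ} {z : Fin n → ℝ} {l : Fin n}

theorem apply_le_limsup_of_mem_omegaLimitSet (hz : z ∈ omegaLimitSet X)
    (hb : IsBoundedUnder (· ≤ ·) atTop fun t => X t l) : z l ≤ limsup (fun t => X t l) atTop :=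
  let ⟨_, hu, hXu⟩ := hz
  (MapClusterPt.of_comp hu (tendsto_pi_nhds.1 hXu l).mapClusterPt).le_limsup hb

theorem apply_eq_of_mem_omegaLimitSet (hz : z ∈ omegaLimitSet X) {a : ℝ}
    (hX : Tendsto (fun t => X t l) atTop (𝓝 a)) : z l = a :=
  let ⟨_, hu, hXu⟩ := hz
  tendsto_nhds_unique (tendsto_pi_nhds.1 hXu l) (hX.comp hu)

end OmegaLimit

namespace IsFlow

variable {n : ℕ} {W : Matrix (Fin n) (Fin n) ℝ} {Med : (Fin n → ℝ) → Fin n → ℝ}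
  {φ : (Fin n → ℝ) → ℝ → Fin n → ℝ}

theorem isCTWMSolution (hφ : IsFlow (fun x => Med x - x) φ) (x : Fin n → ℝ) :
    IsCTWMSolution Med (φ x) :=
  (hφ x).2

theorem dist_add_le (hW : RowStochastic W) (hMed : IsMedSelection W Med)
    (hφ : IsFlow (fun x => Med x - x) φ) (x y : Fin n → ℝ) (a : ℝ) {h : ℝ} (hh : 0 ≤ h) :
    dist (φ x (h + a)) (φ y h) ≤ dist (φ x a) y := by
  simpa [(hφ y).1] using
    ((hφ.isCTWMSolution x).comp_add_const a).dist_le hW hMed (hφ.isCTWMSolution y) hh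

theorem tendsto_add (hW : RowStochastic W) (hMed : IsMedSelection W Med)
    (hφ : IsFlow (fun x => Med x - x) φ) {x p : Fin n → ℝ} {u : ℕ → ℝ}
    (hu : Tendsto (fun k => φ x (u k)) atTop (𝓝 p)) {h : ℝ} (hh : 0 ≤ h) :
    Tendsto (fun k => φ x (h + u k)) atTop (𝓝 (φ p h)) :=
  tendsto_iff_dist_tendsto_zero.2 <| squeeze_zero (fun _ => dist_nonneg)
    (fun k => hφ.dist_add_le hW hMed x p (u k) hh) (tendsto_iff_dist_tendsto_zero.1 hu)

theorem mem_omegaLimitSet (hW : RowStochastic W) (hMed : IsMedSelection W Med)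
    (hφ : IsFlow (fun x => Med x - x) φ) {x p : Fin n → ℝ} (hp : p ∈ omegaLimitSet (φ x))
    {h : ℝ} (hh : 0 ≤ h) : φ p h ∈ omegaLimitSet (φ x) :=
  let ⟨u, hu, hup⟩ := hp
  ⟨fun k => h + u k, tendsto_atTop_add_const_left _ _ hu, hφ.tendsto_add hW hMed hup hh⟩

/-- After a time at which `φ x` is within `c - a` of `p`, nonexpansiveness keeps it within
`c - a` of the flow through `p`. -/
theorem eventually_lt_apply (hW : RowStochastic W) (hMed : IsMedSelection W Med)
    (hφ : IsFlow (fun x => Med x - x) φ) {x p : Fin n → ℝ} (hp : p ∈ omegaLimitSet (φ x))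
    {i : Fin n} {T c a : ℝ} (hc : ∀ t, T ≤ t → c ≤ φ p t i) (ha : a < c) :
    ∀ᶠ t in atTop, a < φ x t i := by
  obtain ⟨u, -, hup⟩ := hp
  obtain ⟨k, hk⟩ := (hup.eventually (Metric.ball_mem_nhds p (sub_pos.2 ha))).exists
  filter_upwards [eventually_ge_atTop (max T 0 + u k)] with t ht
  have hdist := hφ.dist_add_le hW hMed x p (u k) (h := t - u k) (by linarith [le_max_right T 0])
  rw [sub_add_cancel] at hdist
  have hclose := (dist_le_pi_dist _ _ i).trans_lt (hdist.trans_lt hk)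
  rw [Real.dist_eq] at hclose
  linarith [(abs_lt.1 hclose).1, hc (t - u k) (by linarith [le_max_left T 0])]

theorem abs_apply_le (hW : RowStochastic W) (hMed : IsMedSelection W Med)
    (hφ : IsFlow (fun x => Med x - x) φ) (x : Fin n → ℝ) {t : ℝ} (ht : 0 ≤ t) (l : Fin n) :
    |φ x t l| ≤ ‖x‖ := by
  have := (hφ.isCTWMSolution x).norm_le hW hMed ht
  rw [(hφ x).1] at this
  exact (norm_le_pi_norm (φ x t) l).trans this

theorem isBoundedUnder_le_apply (hW : RowStochastic W) (hMed : IsMedSelection W Med)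
    (hφ : IsFlow (fun x => Med x - x) φ) (x : Fin n → ℝ) (l : Fin n) :
    IsBoundedUnder (· ≤ ·) atTop fun t => φ x t l :=
  isBoundedUnder_of_eventually_le <| (eventually_ge_atTop 0).mono fun _ ht =>
    (abs_le.1 (hφ.abs_apply_le hW hMed x ht l)).2

theorem isBoundedUnder_ge_apply (hW : RowStochastic W) (hMed : IsMedSelection W Med)
    (hφ : IsFlow (fun x => Med x - x) φ) (x : Fin n → ℝ) (l : Fin n) :
    IsBoundedUnder (· ≥ ·) atTop fun t => φ x t l :=
  isBoundedUnder_of_eventually_ge <| (eventually_ge_atTop 0).mono fun _ ht =>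
    (abs_le.1 (hφ.abs_apply_le hW hMed x ht l)).1

/-- Time `1` rather than `0`: the bounds along the flow through an ω-limit point hold only at
nonnegative times, and the local maximum argument needs them on both sides. -/
theorem exists_mem_omegaLimitSet_apply_one_eq_limsup (hW : RowStochastic W)
    (hMed : IsMedSelection W Med) (hφ : IsFlow (fun x => Med x - x) φ) (x : Fin n → ℝ)
    (i : Fin n) : ∃ p ∈ omegaLimitSet (φ x), φ p 1 i = limsup (fun t => φ x t i) atTop := by
  obtain ⟨τ, hXτ, hτ⟩ := exists_seq_tendsto_limsup
    (hφ.isBoundedUnder_ge_apply hW hMed x i).isCoboundedUnder_le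
    (hφ.isBoundedUnder_le_apply hW hMed x i)
  have hball : ∃ᶠ k in atTop, φ x (τ k - 1) ∈ Metric.closedBall 0 ‖x‖ :=
    (hτ.eventually (eventually_ge_atTop 1)).frequently.mono fun k hk => by
      simpa [(hφ x).1] using (hφ.isCTWMSolution x).norm_le hW hMed (sub_nonneg.2 hk)
  obtain ⟨p, -, ψ, hψ, hp⟩ := tendsto_subseq_of_frequently_bounded Metric.isBounded_closedBall hball
  have hu : Tendsto (fun k => τ (ψ k) - 1) atTop atTop := by
    simpa [sub_eq_add_neg] using
      tendsto_atTop_add_const_right _ (-1) (hτ.comp hψ.tendsto_atTop)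
  refine ⟨p, ⟨_, hu, hp⟩, ?_⟩
  have hone := tendsto_pi_nhds.1
    (hφ.tendsto_add hW hMed (u := fun k => τ (ψ k) - 1) hp zero_le_one) i
  simp only [add_sub_cancel] at hone
  exact tendsto_nhds_unique hone (hXτ.comp hψ.tendsto_atTop)

theorem tendsto_limsup_of_forall_lt (hW : RowStochastic W) (hMed : IsMedSelection W Med)
    (hφ : IsFlow (fun x => Med x - x) φ) (x : Fin n → ℝ) (i : Fin n)
    (IH : ∀ j, limsup (fun t => φ x t i) atTop < limsup (fun t => φ x t j) atTop →
      Tendsto (fun t => φ x t j) atTop (𝓝 (limsup (fun t => φ x t j) atTop))) :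
    Tendsto (fun t => φ x t i) atTop (𝓝 (limsup (fun t => φ x t i) atTop)) := by
  set s : Fin n → ℝ := fun l => limsup (fun t => φ x t l) atTop
  obtain ⟨p, hp, hpi⟩ := hφ.exists_mem_omegaLimitSet_apply_one_eq_limsup hW hMed x i
  have hle : ∀ t, 0 ≤ t → ∀ l, φ p t l ≤ s l := fun t ht l =>
    apply_le_limsup_of_mem_omegaLimitSet (hφ.mem_omegaLimitSet hW hMed hp ht)
      (hφ.isBoundedUnder_le_apply hW hMed x l)
  have hmax : ∀ l, s i ≤ φ p 1 l → IsLocalMax (fun t => φ p t l) 1 := fun l hl => by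
    have htop : φ p 1 l = s l := by
      rcases lt_or_ge (s i) (s l) with hlt | hge
      · exact apply_eq_of_mem_omegaLimitSet (hφ.mem_omegaLimitSet hW hMed hp zero_le_one) (IH l hlt)
      · exact le_antisymm (hle 1 zero_le_one l) (hge.trans hl)
    filter_upwards [Ioi_mem_nhds zero_lt_one] with t ht
    exact htop ▸ hle t (le_of_lt ht) l
  have hfreeze : ∀ t, 1 ≤ t → s i ≤ φ p t i := fun t ht =>
    (hφ.isCTWMSolution p).le_of_cohesive hW hMed
      ((hφ.isCTWMSolution p).cohesive_of_isLocalMax hW hMed hmax) (fun l hl => by simpa using hl)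
      ht (by simp [hpi, s])
  exact tendsto_order.2 ⟨fun a ha => hφ.eventually_lt_apply hW hMed hp hfreeze ha,
    fun a ha => eventually_lt_of_limsup_lt ha (hφ.isBoundedUnder_le_apply hW hMed x i)⟩

theorem tendsto_limsup (hW : RowStochastic W) (hMed : IsMedSelection W Med)
    (hφ : IsFlow (fun x => Med x - x) φ) (x : Fin n → ℝ) (i : Fin n) :
    Tendsto (fun t => φ x t i) atTop (𝓝 (limsup (fun t => φ x t i) atTop)) := by
  set s : Fin n → ℝ := fun l => limsup (fun t => φ x t l) atTop
  have hwf : WellFounded fun j i => s i < s j :=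
    @Finite.wellFounded_of_trans_of_irrefl _ _ _ ⟨fun _ _ _ h₁ h₂ => h₂.trans h₁⟩
      ⟨fun _ => lt_irrefl _⟩
  exact hwf.induction i fun i IH => hφ.tendsto_limsup_of_forall_lt hW hMed x i IH

end IsFlow

/-- Global convergence of the CTWM dynamics: every solution converges to some
equilibrium in `X_eq`. -/
theorem ctwm_global_convergence {n : ℕ}
    (W : Matrix (Fin n) (Fin n) ℝ) (hW : RowStochastic W)
    (Med : (Fin n → ℝ) → Fin n → ℝ) (hMed : IsMedSelection W Med)
    (φ : (Fin n → ℝ) → ℝ → (Fin n → ℝ))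
    (hφ : IsFlow (fun x => Med x - x) φ) :
    ∀ x0 : Fin n → ℝ, ∃ xs ∈ Xeq W, Tendsto (φ x0) atTop (𝓝 xs) := by
  intro x0
  have hconv : Tendsto (φ x0) atTop (𝓝 fun i => limsup (fun t => φ x0 t i) atTop) :=
    tendsto_pi_nhds.2 (hφ.tendsto_limsup hW hMed x0)
  exact ⟨_, mem_Xeq_of_forall_isWeightedMedian hW
    ((hφ.isCTWMSolution x0).isWeightedMedian_of_tendsto hW hMed hconv), hconv⟩
end

section
/- Continuity of the limit map: consider ẋ = f(x) with f : ℝ^n → ℝ^n globally Lipschitz, and suppose (a) the system converges, i.e., for every x ∈ ℝ^n the limit φ̄(x) = lim_{t→∞} φ(t,x) exists, and (b) every equilibrium is stable, i.e., if f(x*) = 0 then for every ε > 0 there exists δ > 0 such that every solution starting in the ball B(x*,δ) remains in B(x*,ε) for all t > 0. Then the map φ̄ : ℝ^n → ℝ^n is continuous (and therefore Borel measurable). -/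
open Finset Filter Topology

/-!
Every limit `φbar x` is an equilibrium, hence Lyapunov stable: there is `δ` such that
trajectories entering `B(φbar x, δ)` stay in `B(φbar x, ε)`. The trajectory of `x` enters
`B(φbar x, δ)` at some time `T`, and by continuous dependence on initial data (Grönwall) so do
the trajectories of all `y` near `x`; from then on they stay in `B(φbar x, ε)`, so their limits
lie in the closed ball.
-/

open Metric

def LyapunovStable {α : Type*} [PseudoMetricSpace α] (φ : α → ℝ → α) (p : α) : Prop :=
  ∀ ε > (0 : ℝ), ∃ δ > (0 : ℝ), ∀ y ∈ ball p δ, ∀ t > (0 : ℝ), φ y t ∈ ball p ε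

theorem continuous_of_tendsto_of_lyapunovStable {α : Type*} [PseudoMetricSpace α]
    {φ : α → ℝ → α} {φbar : α → α}
    (hshift : ∀ y, ∀ T ≥ (0 : ℝ), ∀ t > (0 : ℝ), φ (φ y T) t = φ y (T + t))
    (hcont : ∀ T ≥ (0 : ℝ), Continuous fun y => φ y T)
    (hconv : ∀ x, Tendsto (φ x) atTop (𝓝 (φbar x)))
    (hstab : ∀ x, LyapunovStable φ (φbar x)) :
    Continuous φbar := by
  refine continuous_iff_continuousAt.2 fun x => ?_
  refine nhds_basis_closedBall.tendsto_right_iff.2 fun ε hε => ?_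
  obtain ⟨δ, hδ, hball⟩ := hstab x ε hε
  obtain ⟨T, hT, hxT⟩ : ∃ T ≥ (0 : ℝ), φ x T ∈ ball (φbar x) δ :=
    ((eventually_ge_atTop 0).and ((hconv x).eventually (ball_mem_nhds _ hδ))).exists
  filter_upwards [(hcont T hT).continuousAt.eventually (isOpen_ball.mem_nhds hxT)] with y hyT
  refine isClosed_closedBall.mem_of_tendsto
    ((hconv y).comp (tendsto_atTop_add_const_left _ T tendsto_id)) ?_
  filter_upwards [eventually_gt_atTop 0] with t ht
  rw [Function.comp_apply, id, ← hshift y T hT t ht]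
  exact ball_subset_closedBall (hball _ hyT t ht)

theorem eq_zero_of_tendsto_of_hasDerivAt {E : Type*} [NormedAddCommGroup E] [NormedSpace ℝ E]
    {γ γ' : ℝ → E} {L v : E} (hγ : ∀ t, HasDerivAt γ (γ' t) t)
    (hL : Tendsto γ atTop (𝓝 L)) (hv : Tendsto γ' atTop (𝓝 v)) : v = 0 := by
  have hstep : Tendsto (fun t => γ (t + 1) - γ t) atTop (𝓝 v) := by
    refine Metric.tendsto_nhds.2 fun ε hε => ?_
    obtain ⟨N, hN⟩ := eventually_atTop.1 (Metric.tendsto_nhds.1 hv (ε / 2) (half_pos hε))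
    filter_upwards [eventually_ge_atTop N] with t ht
    have hdrift : ∀ s ∈ Set.Icc t (t + 1),
        HasDerivWithinAt (fun s => γ s - s • v) (γ' s - v) (Set.Icc t (t + 1)) s := fun s _ =>
      ((hγ s).sub (by simpa using (hasDerivAt_id s).smul_const v)).hasDerivWithinAt
    have hbound := norm_image_sub_le_of_norm_deriv_le_segment' hdrift
      (fun s hs => by rw [← dist_eq_norm]; exact (hN s (ht.trans hs.1)).le)
      (t + 1) ⟨by linarith, le_rfl⟩
    rw [dist_eq_norm]
    calc ‖γ (t + 1) - γ t - v‖ = ‖γ (t + 1) - (t + 1) • v - (γ t - t • v)‖ := by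
          congr 1; rw [add_smul, one_smul]; abel
      _ ≤ ε / 2 * (t + 1 - t) := hbound
      _ < ε := by linarith
  have hstep0 : Tendsto (fun t => γ (t + 1) - γ t) atTop (𝓝 0) := by
    simpa using (hL.comp (tendsto_atTop_add_const_right _ 1 tendsto_id)).sub hL
  exact tendsto_nhds_unique hstep hstep0

namespace IsFlow

variable {n : ℕ} {f : (Fin n → ℝ) → (Fin n → ℝ)} {φ : (Fin n → ℝ) → ℝ → (Fin n → ℝ)}

theorem continuous_apply_s14 (hφ : IsFlow f φ) (x : Fin n → ℝ) : Continuous (φ x) :=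
  continuous_iff_continuousAt.2 fun t => ((hφ x).2 t).continuousAt

theorem apply_apply {K : NNReal} (hf : LipschitzWith K f) (hφ : IsFlow f φ)
    (y : Fin n → ℝ) (T : ℝ) : φ (φ y T) = fun t => φ y (T + t) := by
  refine ODE_solution_unique_univ (v := fun _ => f) (s := fun _ => Set.univ) (t₀ := 0)
    (fun _ => hf.lipschitzOnWith) (fun t => ⟨(hφ _).2 t, trivial⟩) (fun t => ⟨?_, trivial⟩)
    (by simp [(hφ _).1])
  simpa [Function.comp_def] using ((hφ y).2 (T + t)).scomp t ((hasDerivAt_id t).const_add T)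

theorem dist_apply_le_s14 {K : NNReal} (hf : LipschitzWith K f) (hφ : IsFlow f φ)
    {t : ℝ} (ht : 0 ≤ t) (x y : Fin n → ℝ) :
    dist (φ x t) (φ y t) ≤ dist x y * Real.exp (K * t) := by
  simpa [(hφ x).1, (hφ y).1] using dist_le_of_trajectories_ODE (v := fun _ => f) (fun _ => hf)
    (hφ.continuous_apply_s14 x).continuousOn (fun s _ => ((hφ x).2 s).hasDerivWithinAt)
    (hφ.continuous_apply_s14 y).continuousOn (fun s _ => ((hφ y).2 s).hasDerivWithinAt)
    le_rfl t ⟨ht, le_rfl⟩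

theorem continuous_apply_left {K : NNReal} (hf : LipschitzWith K f) (hφ : IsFlow f φ)
    {t : ℝ} (ht : 0 ≤ t) : Continuous fun x => φ x t :=
  (LipschitzWith.of_dist_le_mul (K := ⟨Real.exp (K * t), (Real.exp_pos _).le⟩) fun x y =>
    (hφ.dist_apply_le_s14 hf ht x y).trans_eq (mul_comm _ _)).continuous

theorem map_eq_zero_of_tendsto (hf : Continuous f) (hφ : IsFlow f φ) {x L : Fin n → ℝ}
    (hL : Tendsto (φ x) atTop (𝓝 L)) : f L = 0 :=
  eq_zero_of_tendsto_of_hasDerivAt (hφ x).2 hL ((hf.tendsto L).comp hL)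

end IsFlow

/-- Continuity (and hence measurability) of the limit map of a convergent system
with stable equilibria. -/
theorem limit_map_continuous {n : ℕ}
    (f : (Fin n → ℝ) → (Fin n → ℝ)) (K : NNReal) (hf : LipschitzWith K f)
    (φ : (Fin n → ℝ) → ℝ → (Fin n → ℝ)) (hφ : IsFlow f φ)
    (φbar : (Fin n → ℝ) → (Fin n → ℝ))
    (hconv : ∀ x : Fin n → ℝ, Tendsto (φ x) atTop (𝓝 (φbar x)))
    (hstab : ∀ xs : Fin n → ℝ, f xs = 0 → ∀ ε > (0:ℝ), ∃ δ > (0:ℝ),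
        ∀ x ∈ Metric.ball xs δ, ∀ t > (0:ℝ), φ x t ∈ Metric.ball xs ε) :
    Continuous φbar ∧ Measurable φbar := by
  have hcont : Continuous φbar :=
    continuous_of_tendsto_of_lyapunovStable
      (fun y T _ t _ => congrFun (hφ.apply_apply hf y T) t) (fun _ hT => hφ.continuous_apply_left hf hT)
      hconv (fun x => hstab _ (hφ.map_eq_zero_of_tendsto hf.continuous (hconv x)))
  exact ⟨hcont, hcont.measurable⟩
end

section
/- Local growth without overtaking: let φ(t,x0) be the solution of the CTWM dynamics and suppose that at some time t, Med_i(φ(t,x0);W) > φ_i(t,x0) for some agent i. Then there exists a time t' > t such that φ_i(t',x0) > φ_i(t,x0), and φ_i(t',x0) < φ_j(t',x0) for every j such that φ_j(t,x0) > φ_i(t,x0); that is, x_i increases but does not exceed any agent that had a larger opinion at time t. -/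
open Finset Filter Topology

/-! At time `t` the `i`-th coordinate has derivative `Med_i - x_i > 0`, so it increases right
after `t`; meanwhile each of the finitely many strict inequalities `x_i < x_j` persists for a
short time by continuity. -/

theorem HasDerivAt.eventually_nhdsGT_lt {f : ℝ → ℝ} {f' x : ℝ} (hf : HasDerivAt f f' x)
    (hf' : 0 < f') : ∀ᶠ y in 𝓝[>] x, f x < f y := by
  filter_upwards [(hf.tendsto_slope.mono_left (nhdsGT_le_nhdsNE x)).eventually
    (eventually_gt_nhds hf'), self_mem_nhdsWithin] with y hslope hxy
  exact (slope_pos_iff_of_le (le_of_lt hxy)).1 hslope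

theorem ContinuousAt.eventually_forall_lt_imp_lt {α ι β : Type*} [TopologicalSpace α] [Finite ι]
    [LinearOrder β] [TopologicalSpace β] [OrderClosedTopology β] {x : α → ι → β} {t : α}
    (hx : ContinuousAt x t) (i : ι) : ∀ᶠ s in 𝓝 t, ∀ j, x t i < x t j → x s i < x s j := by
  refine eventually_all.2 fun j => ?_
  by_cases hij : x t i < x t j
  · filter_upwards [(continuousAt_pi.1 hx i).eventually_lt (continuousAt_pi.1 hx j) hij]
      with s hs _ using hs
  · exact Eventually.of_forall fun _ h => absurd h hij

theorem local_growth_without_overtaking_general {n : ℕ}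
    (Med : (Fin n → ℝ) → Fin n → ℝ)
    (φ : (Fin n → ℝ) → ℝ → (Fin n → ℝ))
    (hφ : IsFlow (fun x => Med x - x) φ)
    (x0 : Fin n → ℝ) (t : ℝ) (i : Fin n)
    (hgt : φ x0 t i < Med (φ x0 t) i) :
    ∃ t' : ℝ, t < t' ∧ φ x0 t i < φ x0 t' i ∧
      ∀ j : Fin n, φ x0 t i < φ x0 t j → φ x0 t' i < φ x0 t' j := by
  have hderiv := (hφ x0).2 t
  have hgrowth : ∀ᶠ s in 𝓝[>] t, φ x0 t i < φ x0 s i :=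
    (hasDerivAt_pi.1 hderiv i).eventually_nhdsGT_lt (sub_pos.2 hgt)
  have hkeep : ∀ᶠ s in 𝓝[>] t, ∀ j, φ x0 t i < φ x0 t j → φ x0 s i < φ x0 s j :=
    nhdsWithin_le_nhds (hderiv.continuousAt.eventually_forall_lt_imp_lt i)
  obtain ⟨t', ⟨hup, hnot⟩, htt'⟩ := ((hgrowth.and hkeep).and self_mem_nhdsWithin).exists
  exact ⟨t', htt', hup, hnot⟩

/-- Local growth without overtaking: if agent `i`'s weighted median exceeds its current
opinion, then at some later time its opinion has increased but has not exceeded the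
opinion of any agent that had a larger opinion. -/
theorem local_growth_without_overtaking {n : ℕ}
    (W : Matrix (Fin n) (Fin n) ℝ) (hW : RowStochastic W)
    (Med : (Fin n → ℝ) → Fin n → ℝ) (hMed : IsMedSelection W Med)
    (φ : (Fin n → ℝ) → ℝ → (Fin n → ℝ))
    (hφ : IsFlow (fun x => Med x - x) φ)
    (x0 : Fin n → ℝ) (t : ℝ) (ht : 0 ≤ t) (i : Fin n)
    (hgt : φ x0 t i < Med (φ x0 t) i) :
    ∃ t' : ℝ, t < t' ∧ φ x0 t i < φ x0 t' i ∧
      ∀ j : Fin n, φ x0 t i < φ x0 t j → φ x0 t' i < φ x0 t' j :=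
  local_growth_without_overtaking_general Med φ hφ x0 t i hgt
end
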